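/- arXiv:1103.0487 — 5 statements merged into one kernel-verified Lean document; each statement's English description precedes it below -/
import Mathlib

section
/- Under the rigid-embedding hypotheses, there exists an isometric embedding ι : Z₁ → Z₂ such that ι₂ = ι ∘ ι₁. -/
/-!
Every `±1`-combination of the rows of `A₁` is the restriction of a short characteristic
covector, hence (by surjectivity for `ι₂`) also a `±1`-combination of the rows of `A₂`, and
conversely. Taking the best signs for a test vector `u` shows that the two zonotope support
functions `u ↦ ∑ j, |⟨a_j, u⟩|` and `u ↦ ∑ k, |⟨b_k, u⟩|` agree. Such a function determines, for
every line through the origin, the total weight `∑ |⟨x, a⟩|` of the generators `x` on it: probe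
it at `t • u ± a` with `u ⊥ a` generic and `t` large.

The rows `a_j` are nonzero `0/1` vectors, so every nonzero `b_k` is `z_k` times one of them with
`z_k ∈ ℤ`, and the line weights give
`∑ |a_j|² = ∑ |z_k| |a_{j(k)}|² ≤ ∑ z_k² |a_{j(k)}|² = ∑ |b_k|²`.
Equality of the traces of `A₁ᵀA₁ = A₂ᵀA₂` forces `z_k = ±1`, after which the line weights match
the nonzero rows of `A₂` bijectively, up to sign, with the rows of `A₁`.
-/

set_option linter.unusedSectionVars false

open Matrix BigOperators

namespace Greene

/-- A rational number is an integer. -/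
def isInt (q : ℚ) : Prop := ∃ m : ℤ, q = (m : ℚ)

section LatticeDefs

variable {ι : Type} [Fintype ι] [DecidableEq ι]
variable {ι' : Type} [Fintype ι'] [DecidableEq ι']

/-- The bilinear form on `ι → ℚ` with (integral) Gram matrix `B`. -/
def qform (B : Matrix ι ι ℤ) (x y : ι → ℚ) : ℚ :=
  x ⬝ᵥ ((B.map (Int.cast : ℤ → ℚ)) *ᵥ y)

/-- The set of integer vectors: the standard lattice inside `ι → ℚ`. -/
def intVecs (ι : Type) [Fintype ι] [DecidableEq ι] : Set (ι → ℚ) :=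
  {x | ∀ i, isInt (x i)}

lemma qform_zero_left (B : Matrix ι ι ℤ) (y : ι → ℚ) : qform B 0 y = 0 :=
  zero_dotProduct _

lemma qform_add_left (B : Matrix ι ι ℤ) (x x' y : ι → ℚ) :
    qform B (x + x') y = qform B x y + qform B x' y := add_dotProduct _ _ _

lemma qform_neg_left (B : Matrix ι ι ℤ) (x y : ι → ℚ) :
    qform B (-x) y = -qform B x y := neg_dotProduct _ _

/-- The dual lattice `S* = {x ∈ span_ℚ S | ⟨x,y⟩ ∈ ℤ for all y ∈ S}`. -/
def dualOf (B : Matrix ι ι ℤ) (S : Set (ι → ℚ)) : AddSubgroup (ι → ℚ) where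
  carrier := {x | x ∈ Submodule.span ℚ S ∧ ∀ y ∈ S, isInt (qform B x y)}
  zero_mem' := ⟨Submodule.zero_mem _, fun y _ => ⟨0, by simp [qform_zero_left]⟩⟩
  add_mem' := by
    intro a b ha hb
    refine ⟨Submodule.add_mem _ ha.1 hb.1, fun y hy => ?_⟩
    obtain ⟨m, hm⟩ := ha.2 y hy
    obtain ⟨m', hm'⟩ := hb.2 y hy
    exact ⟨m + m', by rw [qform_add_left, hm, hm']; push_cast; ring⟩
  neg_mem' := by
    intro a ha
    refine ⟨Submodule.neg_mem _ ha.1, fun y hy => ?_⟩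
    obtain ⟨m, hm⟩ := ha.2 y hy
    exact ⟨-m, by rw [qform_neg_left, hm]; push_cast; ring⟩

/-- Characteristic covectors: `χ ∈ S*` with `⟨χ,y⟩ ≡ ⟨y,y⟩ (mod 2)` for all `y ∈ S`. -/
def CharOf (B : Matrix ι ι ℤ) (S : Set (ι → ℚ)) : Set (ι → ℚ) :=
  {χ | χ ∈ dualOf B S ∧ ∀ y ∈ S, ∃ m : ℤ, qform B χ y - qform B y y = 2 * (m : ℚ)}

/-- Two covectors are in the same class mod `2S`. -/
def SameClass (S : Set (ι → ℚ)) (χ χ' : ι → ℚ) : Prop :=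
  ∃ y ∈ S, χ' = χ + (2 : ℚ) • y

/-- Short characteristic covectors: minimal norm in their class mod `2S`. -/
def ShortOf (B : Matrix ι ι ℤ) (S : Set (ι → ℚ)) : Set (ι → ℚ) :=
  {χ | χ ∈ CharOf B S ∧ ∀ χ' ∈ CharOf B S, SameClass S χ χ' → qform B χ χ ≤ qform B χ' χ'}

/-- Rank of a lattice: dimension of its rational span. -/
noncomputable def rkOf (S : Set (ι → ℚ)) : ℕ := Module.finrank ℚ (Submodule.span ℚ S)

/-- The lattice `S` sitting inside its dual. -/
def latIn (B : Matrix ι ι ℤ) (S : Set (ι → ℚ)) : AddSubgroup (dualOf B S) :=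
  AddSubgroup.closure {x | (x : ι → ℚ) ∈ S}

/-- The discriminant group `S*/S`. -/
def disc (B : Matrix ι ι ℤ) (S : Set (ι → ℚ)) : Type :=
  dualOf B S ⧸ latIn B S

noncomputable instance (B : Matrix ι ι ℤ) (S : Set (ι → ℚ)) : AddCommGroup (disc B S) :=
  inferInstanceAs (AddCommGroup (dualOf B S ⧸ latIn B S))

/-- The class of a dual vector in the discriminant group. -/
def dmk (B : Matrix ι ι ℤ) (S : Set (ι → ℚ)) {x : ι → ℚ} (hx : x ∈ dualOf B S) :
    disc B S := QuotientAddGroup.mk (⟨x, hx⟩ : dualOf B S)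

/-- `S` is an additive subgroup (a sublattice, when contained in a lattice). -/
def IsLat (S : Set (ι → ℚ)) : Prop :=
  (0 : ι → ℚ) ∈ S ∧ ∀ x ∈ S, ∀ y ∈ S, x - y ∈ S

/-- The form is integer valued on `S`. -/
def IntegralOn (B : Matrix ι ι ℤ) (S : Set (ι → ℚ)) : Prop :=
  ∀ x ∈ S, ∀ y ∈ S, isInt (qform B x y)

/-- Unimodularity: the dual lattice equals the lattice. -/
def UnimodularOn (B : Matrix ι ι ℤ) (S : Set (ι → ℚ)) : Prop :=
  ((dualOf B S : AddSubgroup (ι → ℚ)) : Set (ι → ℚ)) = S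

/-- Positive definiteness of the form on the span of `S`. -/
def PosDefOn (B : Matrix ι ι ℤ) (S : Set (ι → ℚ)) : Prop :=
  ∀ x ∈ Submodule.span ℚ S, x ≠ 0 → 0 < qform B x x

/-- Orthogonality of two sublattices. -/
def OrthogonalSets (B : Matrix ι ι ℤ) (S T : Set (ι → ℚ)) : Prop :=
  ∀ x ∈ S, ∀ y ∈ T, qform B x y = 0

/-- `S, T` are complementary sublattices of `L`: orthogonal with ranks summing to `rk L`. -/
noncomputable def ComplementaryIn (B : Matrix ι ι ℤ) (L S T : Set (ι → ℚ)) : Prop :=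
  OrthogonalSets B S T ∧ rkOf S + rkOf T = rkOf L

/-- `S ⊆ L` is a primitive sublattice: the restriction map `L* → S*` surjects. -/
def PrimitiveIn (B : Matrix ι ι ℤ) (L S : Set (ι → ℚ)) : Prop :=
  ∀ x ∈ dualOf B S, ∃ z ∈ dualOf B L, ∀ u ∈ S, qform B z u = qform B x u

/-- `s` is the signature of the form restricted to the span of `S` (Sylvester form). -/
def IsSignatureOf (B : Matrix ι ι ℤ) (S : Set (ι → ℚ)) (s : ℤ) : Prop :=
  ∃ (p q : ℕ) (v : Fin (p + q) → (ι → ℚ)),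
    (∀ i, v i ∈ Submodule.span ℚ S) ∧
    Submodule.span ℚ (Set.range v) = Submodule.span ℚ S ∧
    LinearIndependent ℚ v ∧
    (∀ i j, i ≠ j → qform B (v i) (v j) = 0) ∧
    (∀ i : Fin (p + q),
      if (i : ℕ) < p then 0 < qform B (v i) (v i) else qform B (v i) (v i) < 0) ∧
    s = (p : ℤ) - (q : ℤ)

/-- `S` admits an orthonormal basis of `n` elements, i.e. `S ≅ ℤⁿ`. -/
def HasOrthonormalBasis (B : Matrix ι ι ℤ) (S : Set (ι → ℚ)) (n : ℕ) : Prop :=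
  ∃ v : Fin n → (ι → ℚ), (∀ i, v i ∈ S) ∧
    (∀ i j, qform B (v i) (v j) = if i = j then 1 else 0) ∧
    (∀ x ∈ S, ∃ c : Fin n → ℤ, x = ∑ i, (c i : ℚ) • v i)

/-- Isomorphism of lattices: an additive bijection preserving the forms. -/
def LatIso (B : Matrix ι ι ℤ) (S : Set (ι → ℚ)) (B' : Matrix ι' ι' ℤ) (S' : Set (ι' → ℚ)) :
    Prop :=
  ∃ f : (ι → ℚ) → (ι' → ℚ), Set.BijOn f S S' ∧
    (∀ x ∈ S, ∀ y ∈ S, f (x + y) = f x + f y) ∧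
    (∀ x ∈ S, ∀ y ∈ S, qform B' (f x) (f y) = qform B x y)

/-- An isomorphism of the torsors `C(S₁) → C(S₂)` (given on representatives by `Φ`),
covering the group isomorphism `ψ` of discriminant groups. -/
def TorsorMapIso (B₁ : Matrix ι ι ℤ) (S₁ : Set (ι → ℚ))
    (B₂ : Matrix ι' ι' ℤ) (S₂ : Set (ι' → ℚ))
    (Φ : (ι → ℚ) → (ι' → ℚ)) (ψ : disc B₁ S₁ ≃+ disc B₂ S₂) : Prop :=
  (∀ χ ∈ CharOf B₁ S₁, Φ χ ∈ CharOf B₂ S₂) ∧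
  (∀ χ ∈ CharOf B₁ S₁, ∀ χ' ∈ CharOf B₁ S₁,
    (SameClass S₁ χ χ' ↔ SameClass S₂ (Φ χ) (Φ χ'))) ∧
  (∀ μ ∈ CharOf B₂ S₂, ∃ χ ∈ CharOf B₁ S₁, SameClass S₂ (Φ χ) μ) ∧
  (∀ χ ∈ CharOf B₁ S₁, ∀ χ' ∈ CharOf B₁ S₁,
    ∀ (x : ι → ℚ) (y : ι' → ℚ) (hx : x ∈ dualOf B₁ S₁) (hy : y ∈ dualOf B₂ S₂),
      χ' = χ + (2 : ℚ) • x → Φ χ' = Φ χ + (2 : ℚ) • y →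
      ψ (dmk B₁ S₁ hx) = dmk B₂ S₂ hy)

/-- Compatibility of `Φ` with the `d`-invariants: `d₂([Φ χ]) = ε · d₁([χ])`,
where `d` is the minimum of `(|χ'|² - rk)/4` over the class. -/
noncomputable def DCompat (B₁ : Matrix ι ι ℤ) (S₁ : Set (ι → ℚ))
    (B₂ : Matrix ι' ι' ℤ) (S₂ : Set (ι' → ℚ))
    (ε : ℚ) (Φ : (ι → ℚ) → (ι' → ℚ)) : Prop :=
  ∀ χ ∈ CharOf B₁ S₁, ∀ q : ℚ,
    IsLeast {t | ∃ χ' ∈ CharOf B₁ S₁, SameClass S₁ χ χ' ∧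
      t = (qform B₁ χ' χ' - (rkOf S₁ : ℚ)) / 4} q →
    IsLeast {t | ∃ μ ∈ CharOf B₂ S₂, SameClass S₂ (Φ χ) μ ∧
      t = (qform B₂ μ μ - (rkOf S₂ : ℚ)) / 4} (ε * q)

/-- Compatibility of `Φ` with the `ρ`-invariants: `ρ₂([Φ χ]) ≡ ε · ρ₁([χ]) (mod 2)`. -/
def RhoCompat (B₁ : Matrix ι ι ℤ) (S₁ : Set (ι → ℚ))
    (B₂ : Matrix ι' ι' ℤ) (S₂ : Set (ι' → ℚ))
    (ε : ℚ) (Φ : (ι → ℚ) → (ι' → ℚ)) : Prop :=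
  ∀ χ ∈ CharOf B₁ S₁, ∀ s₁ s₂ : ℤ, IsSignatureOf B₁ S₁ s₁ → IsSignatureOf B₂ S₂ s₂ →
    ∃ m : ℤ, (qform B₂ (Φ χ) (Φ χ) - (s₂ : ℚ)) / 4 - ε * ((qform B₁ χ χ - (s₁ : ℚ)) / 4)
      = 2 * (m : ℚ)

/-- The `d`-invariants `(C(S₁), d₁)` and `(C(S₂), ε·d₂)` are isomorphic. -/
noncomputable def DIso (B₁ : Matrix ι ι ℤ) (S₁ : Set (ι → ℚ))
    (B₂ : Matrix ι' ι' ℤ) (S₂ : Set (ι' → ℚ)) (ε : ℚ) : Prop :=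
  ∃ (Φ : (ι → ℚ) → (ι' → ℚ)) (ψ : disc B₁ S₁ ≃+ disc B₂ S₂),
    TorsorMapIso B₁ S₁ B₂ S₂ Φ ψ ∧ DCompat B₁ S₁ B₂ S₂ ε Φ

end LatticeDefs

/-- An abstract integral lattice, presented by its Gram matrix. -/
structure IntLattice where
  n : ℕ
  B : Matrix (Fin n) (Fin n) ℤ
  symm : B.IsSymm
  nondeg : B.det ≠ 0

/-- The Gram matrix of the orthogonal direct sum `Λ₁ ⊥ Λ₂`. -/
def glueGram (L₁ L₂ : IntLattice) :
    Matrix (Fin L₁.n ⊕ Fin L₂.n) (Fin L₁.n ⊕ Fin L₂.n) ℤ :=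
  Matrix.fromBlocks L₁.B 0 0 L₂.B

/-- The glue lattice `Λ₁ ⊕_ψ Λ₂ = {x + y ∈ Λ₁* ⊕ Λ₂* : ψ(x̄) = ȳ}`. -/
def glueSet (L₁ L₂ : IntLattice)
    (ψ : disc L₁.B (intVecs (Fin L₁.n)) ≃+ disc L₂.B (intVecs (Fin L₂.n))) :
    Set (Fin L₁.n ⊕ Fin L₂.n → ℚ) :=
  {w | ∃ (h₁ : (w ∘ Sum.inl) ∈ dualOf L₁.B (intVecs (Fin L₁.n)))
        (h₂ : (w ∘ Sum.inr) ∈ dualOf L₂.B (intVecs (Fin L₂.n))),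
        ψ (dmk _ _ h₁) = dmk _ _ h₂}

/-- `Λ₁` embedded in the first factor of `Λ₁* ⊕ Λ₂*`. -/
def inlLat (L₁ L₂ : IntLattice) : Set (Fin L₁.n ⊕ Fin L₂.n → ℚ) :=
  {w | (w ∘ Sum.inl) ∈ intVecs (Fin L₁.n) ∧ w ∘ Sum.inr = 0}

/-- `Λ₂` embedded in the second factor of `Λ₁* ⊕ Λ₂*`. -/
def inrLat (L₁ L₂ : IntLattice) : Set (Fin L₁.n ⊕ Fin L₂.n → ℚ) :=
  {w | (w ∘ Sum.inr) ∈ intVecs (Fin L₂.n) ∧ w ∘ Sum.inl = 0}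

/-- Stabilization `S ⊕ ℤᵏ`. -/
def stabSet {ι : Type} [Fintype ι] [DecidableEq ι] (S : Set (ι → ℚ)) (k : ℕ) :
    Set (ι ⊕ Fin k → ℚ) :=
  {w | (w ∘ Sum.inl) ∈ S ∧ ∀ j, isInt (w (Sum.inr j))}

/-- A finite loopless multigraph, with a reference orientation of each edge. -/
structure MultiGraph where
  nV : ℕ
  nE : ℕ
  hd : Fin nE → Fin nV
  tl : Fin nE → Fin nV
  loopless : ∀ e, hd e ≠ tl e

namespace MultiGraph

/-- The boundary map `C₁(G;ℚ) → C₀(G;ℚ)`, `∂ e = head(e) − tail(e)`. -/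
def bndry (G : MultiGraph) (x : Fin G.nE → ℚ) : Fin G.nV → ℚ :=
  fun v => ∑ e, x e * ((if G.hd e = v then 1 else 0) - (if G.tl e = v then 1 else 0))

/-- The flow lattice `ℱ(G) = ker ∂ ∩ C₁(G;ℤ)`. -/
def flowSet (G : MultiGraph) : Set (Fin G.nE → ℚ) :=
  {x | (∀ e, isInt (x e)) ∧ G.bndry x = 0}

/-- The cut lattice `𝒞(G) = im ∂* ∩ C₁(G;ℤ)`. -/
def cutSet (G : MultiGraph) : Set (Fin G.nE → ℚ) :=
  {x | (∀ e, isInt (x e)) ∧ ∃ g : Fin G.nV → ℚ, ∀ e, x e = g (G.hd e) - g (G.tl e)}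

/-- Reachability using only edges from the set `A`. -/
def ReachIn (G : MultiGraph) (A : Set (Fin G.nE)) : Fin G.nV → Fin G.nV → Prop :=
  Relation.ReflTransGen
    (fun u v => ∃ e ∈ A, (G.hd e = u ∧ G.tl e = v) ∨ (G.hd e = v ∧ G.tl e = u))

def Connected (G : MultiGraph) : Prop := ∀ u v, G.ReachIn Set.univ u v

/-- 2-edge-connectedness: connected, and removing any one edge leaves it connected. -/
def TwoEdgeConnected (G : MultiGraph) : Prop :=
  G.Connected ∧ ∀ e : Fin G.nE, ∀ u v, G.ReachIn {e}ᶜ u v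

/-- `C` is the edge set of a cycle of `G`. -/
def IsCycleEdgeSet (G : MultiGraph) (C : Set (Fin G.nE)) : Prop :=
  ∃ k : ℕ, 0 < k ∧ ∃ (e : Fin k → Fin G.nE) (v : Fin k → Fin G.nV),
    Function.Injective e ∧ Function.Injective v ∧ C = Set.range e ∧
    ∀ i, (G.hd (e i) = v (finRotate k i) ∧ G.tl (e i) = v i) ∨
         (G.tl (e i) = v (finRotate k i) ∧ G.hd (e i) = v i)

/-- A maximal spanning forest: acyclic and realizing all of `G`'s reachability. -/
def IsMaxForest (G : MultiGraph) (F : Finset (Fin G.nE)) : Prop :=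
  (∀ C, G.IsCycleEdgeSet C → ¬(C ⊆ (↑F : Set (Fin G.nE)))) ∧
  ∀ u v, G.ReachIn Set.univ u v → G.ReachIn (↑F) u v

open Classical in
/-- The fundamental cut vector of `e ∈ F`:
`+1` on edges leaving the component `K₁` of the tail of `e` in `F − e`,
`−1` on edges entering it, `0` otherwise. -/
noncomputable def cutVec (G : MultiGraph) (F : Finset (Fin G.nE)) (e : Fin G.nE) :
    Fin G.nE → ℚ := fun j =>
  (if G.ReachIn (↑(F.erase e)) (G.tl j) (G.tl e) then 1 else 0)
    - (if G.ReachIn (↑(F.erase e)) (G.hd j) (G.tl e) then 1 else 0)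

/-- `x` is the fundamental cycle vector of `e ∉ F`: the unique flow supported on
`F ∪ {e}` whose coefficient on `e` is `+1`. -/
def IsFundCycleVec (G : MultiGraph) (F : Finset (Fin G.nE)) (e : Fin G.nE)
    (x : Fin G.nE → ℚ) : Prop :=
  G.bndry x = 0 ∧ (∀ j, j ∉ F → j ≠ e → x j = 0) ∧ x e = 1

/-- Reorienting the edges of `G`: `o e = true` keeps the reference direction. -/
def reorient (G : MultiGraph) (o : Fin G.nE → Bool) : MultiGraph :=
  { G with
    hd := fun e => if o e then G.hd e else G.tl e
    tl := fun e => if o e then G.tl e else G.hd e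
    loopless := by
      intro e
      by_cases h : o e = true
      · simpa [h] using G.loopless e
      · simpa [h] using (G.loopless e).symm }

end MultiGraph

/-- A 2-isomorphism: a bijection of edge sets preserving edge sets of cycles. -/
def TwoIsomorphic (G G' : MultiGraph) : Prop :=
  ∃ σ : Fin G.nE ≃ Fin G'.nE, ∀ C, G.IsCycleEdgeSet C ↔ G'.IsCycleEdgeSet (σ '' C)

lemma dotProduct_self_nonneg {R κ : Type*} [Ring R] [LinearOrder R] [IsStrictOrderedRing R]
    [Fintype κ] (v : κ → R) : 0 ≤ v ⬝ᵥ v :=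
  Finset.sum_nonneg fun i _ => mul_self_nonneg (v i)

section IntegerMultiples

variable {𝕜 κ : Type*} [Field 𝕜] [LinearOrder 𝕜] [IsStrictOrderedRing 𝕜] [Fintype κ]

lemma abs_dotProduct_le_of_eq_intCast_smul {x p : κ → 𝕜} {z : ℤ} (hx : x = (z : 𝕜) • p) :
    |x ⬝ᵥ p| ≤ x ⬝ᵥ x := by
  subst hx
  simp only [smul_dotProduct, dotProduct_smul, smul_eq_mul, abs_mul,
    abs_of_nonneg (dotProduct_self_nonneg p), ← mul_assoc]
  refine mul_le_mul_of_nonneg_right ?_ (dotProduct_self_nonneg p)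
  exact_mod_cast (Int.abs_eq_natAbs z ▸ Int.natAbs_le_self_sq z).trans_eq (sq z)

lemma eq_or_eq_neg_of_abs_dotProduct_eq {x p : κ → 𝕜} {z : ℤ} (hx : x = (z : 𝕜) • p)
    (hx0 : x ≠ 0) (h : |x ⬝ᵥ p| = x ⬝ᵥ x) : x = p ∨ x = -p := by
  subst hx
  have hp : p ⬝ᵥ p ≠ 0 := dotProduct_self_eq_zero.not.mpr fun hp => hx0 (by simp [hp])
  have hz : z ≠ 0 := fun hz => hx0 (by simp [hz])
  simp only [smul_dotProduct, dotProduct_smul, smul_eq_mul, abs_mul,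
    abs_of_nonneg (dotProduct_self_nonneg p), ← mul_assoc] at h
  have hz1 : |z| = 1 := by
    have : |z| = z * z := by exact_mod_cast mul_right_cancel₀ hp h
    nlinarith [abs_mul_abs_self z, abs_pos.mpr hz]
  rcases abs_eq zero_le_one |>.mp hz1 with rfl | rfl <;> simp

end IntegerMultiples

section Zonotope

variable {𝕜 : Type*} [Field 𝕜] [LinearOrder 𝕜] [IsStrictOrderedRing 𝕜] {κ : Type*} [Fintype κ]

lemma exists_eq_smul_of_dotProduct_eq_zero {a x : κ → 𝕜} (ha : a ≠ 0)
    (h : ∀ u, a ⬝ᵥ u = 0 → x ⬝ᵥ u = 0) : ∃ c : 𝕜, x = c • a := by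
  have haa : a ⬝ᵥ a ≠ 0 := dotProduct_self_eq_zero.not.mpr ha
  set c := (x ⬝ᵥ a) / (a ⬝ᵥ a)
  have hav : a ⬝ᵥ (x - c • a) = 0 := by
    rw [dotProduct_sub, dotProduct_smul, smul_eq_mul, div_mul_cancel₀ _ haa, dotProduct_comm,
      sub_self]
  refine ⟨c, sub_eq_zero.mp (dotProduct_self_eq_zero.mp ?_)⟩
  rw [sub_dotProduct, h _ hav, smul_dotProduct, hav, smul_zero, sub_zero]

lemma exists_dotProduct_eq_zero_forall_ne_zero {ι : Type*} [Finite ι] {a : κ → 𝕜} (ha : a ≠ 0)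
    (x : ι → κ → 𝕜) (hx : ∀ i, ¬∃ c : 𝕜, x i = c • a) :
    ∃ u, a ⬝ᵥ u = 0 ∧ ∀ i, x i ⬝ᵥ u ≠ 0 := by
  obtain ⟨u, hu, hxu⟩ := Module.Dual.exists_forall_mem_ne_zero_of_forall_exists
    (LinearMap.ker (dotProductBilin 𝕜 𝕜 a)) (fun i => dotProductBilin 𝕜 𝕜 (x i)) fun i => by
      by_contra! h
      exact hx i (exists_eq_smul_of_dotProduct_eq_zero ha h)
  exact ⟨u, hu, hxu⟩

lemma abs_add_add_abs_sub_of_abs_le {s r : 𝕜} (h : |r| ≤ |s|) : |s + r| + |s - r| = 2 * |s| := by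
  obtain ⟨h₁, h₂⟩ := abs_le.mp h
  rcases abs_cases s with ⟨hs, _⟩ | ⟨hs, _⟩ <;> rw [hs] at h₁ h₂ ⊢
  · rw [abs_of_nonneg (by linarith), abs_of_nonneg (by linarith)]; ring
  · rw [abs_of_nonpos (by linarith), abs_of_nonpos (by linarith)]; ring

open Classical in
lemma sum_abs_dotProduct_add_add_sub {m : Type*} [Fintype m] (R : m → κ → 𝕜) (u a : κ → 𝕜)
    {t : 𝕜} (ht : 0 ≤ t) (hR : ∀ j, R j ⬝ᵥ u ≠ 0 → |R j ⬝ᵥ a| ≤ t * |R j ⬝ᵥ u|) :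
    ∑ j, |R j ⬝ᵥ (t • u + a)| + ∑ j, |R j ⬝ᵥ (t • u - a)| =
      2 * t * ∑ j, |R j ⬝ᵥ u| + 2 * ∑ j with R j ⬝ᵥ u = 0, |R j ⬝ᵥ a| := by
  simp only [dotProduct_add, dotProduct_sub, dotProduct_smul, smul_eq_mul]
  rw [← Finset.sum_add_distrib, Finset.mul_sum, Finset.mul_sum, Finset.sum_filter,
    ← Finset.sum_add_distrib]
  refine Finset.sum_congr rfl fun j _ => ?_
  by_cases hj : R j ⬝ᵥ u = 0
  · simp only [hj, mul_zero, zero_add, zero_sub, abs_neg, abs_zero, if_true]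
    ring
  · rw [abs_add_add_abs_sub_of_abs_le, abs_mul, abs_of_nonneg ht, if_neg hj]
    · ring
    · rw [abs_mul, abs_of_nonneg ht]
      exact hR j hj

open Classical in
theorem sum_abs_dotProduct_parallel_eq {ι ι' : Type*} [Fintype ι] [Fintype ι']
    (P : ι → κ → 𝕜) (Q : ι' → κ → 𝕜) (h : ∀ u, ∑ j, |P j ⬝ᵥ u| = ∑ k, |Q k ⬝ᵥ u|)
    {a : κ → 𝕜} (ha : a ≠ 0) :
    ∑ j with ∃ c : 𝕜, P j = c • a, |P j ⬝ᵥ a| = ∑ k with ∃ c : 𝕜, Q k = c • a, |Q k ⬝ᵥ a| := by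
  obtain ⟨u, hau, hu⟩ := exists_dotProduct_eq_zero_forall_ne_zero ha
    (Sum.elim (fun j : {j // ¬∃ c : 𝕜, P j = c • a} => P j)
      (fun k : {k // ¬∃ c : 𝕜, Q k = c • a} => Q k))
    (by rintro (⟨j, hj⟩ | ⟨k, hk⟩) <;> assumption)
  have orth_iff (x : κ → 𝕜) (hx : (¬∃ c : 𝕜, x = c • a) → x ⬝ᵥ u ≠ 0) :
      x ⬝ᵥ u = 0 ↔ ∃ c : 𝕜, x = c • a := by
    refine ⟨fun h0 => by_contra fun hpar => hx hpar h0, ?_⟩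
    rintro ⟨c, rfl⟩
    rw [smul_dotProduct, hau, smul_zero]
  -- For `t` this large, probing at `t • u ± a` separates the rows on the line `𝕜 • a`, which
  -- contribute `2 |⟨x, a⟩|`, from the others, which contribute `2 t |⟨x, u⟩|`.
  set t := ∑ j, |P j ⬝ᵥ a| / |P j ⬝ᵥ u| + ∑ k, |Q k ⬝ᵥ a| / |Q k ⬝ᵥ u|
  have ht : 0 ≤ t := by positivity
  have hP : ∀ j, P j ⬝ᵥ u ≠ 0 → |P j ⬝ᵥ a| ≤ t * |P j ⬝ᵥ u| := fun j hj =>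
    (div_le_iff₀ (abs_pos.mpr hj)).mp <| le_add_of_le_of_nonneg
      (Finset.single_le_sum (f := fun j => |P j ⬝ᵥ a| / |P j ⬝ᵥ u|)
        (fun _ _ => by positivity) (Finset.mem_univ j)) (by positivity)
  have hQ : ∀ k, Q k ⬝ᵥ u ≠ 0 → |Q k ⬝ᵥ a| ≤ t * |Q k ⬝ᵥ u| := fun k hk =>
    (div_le_iff₀ (abs_pos.mpr hk)).mp <| le_add_of_nonneg_of_le (by positivity)
      (Finset.single_le_sum (f := fun k => |Q k ⬝ᵥ a| / |Q k ⬝ᵥ u|)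
        (fun _ _ => by positivity) (Finset.mem_univ k))
  have hsum := sum_abs_dotProduct_add_add_sub P u a ht hP
  rw [h, h, sum_abs_dotProduct_add_add_sub Q u a ht hQ, h] at hsum
  have hPset : Finset.univ.filter (fun j => P j ⬝ᵥ u = 0) =
      Finset.univ.filter (fun j => ∃ c : 𝕜, P j = c • a) :=
    Finset.filter_congr fun j _ => orth_iff (P j) fun hj => hu (.inl ⟨j, hj⟩)
  have hQset : Finset.univ.filter (fun k => Q k ⬝ᵥ u = 0) =
      Finset.univ.filter (fun k => ∃ c : 𝕜, Q k = c • a) :=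
    Finset.filter_congr fun k _ => orth_iff (Q k) fun hk => hu (.inr ⟨k, hk⟩)
  rw [hPset, hQset] at hsum
  linarith

end Zonotope

section SignVectors

variable {𝕜 : Type*} [Ring 𝕜] [LinearOrder 𝕜] [IsStrictOrderedRing 𝕜]
  {ι ι' κ : Type*} [Fintype ι] [Fintype ι'] [Fintype κ]

lemma intCast_dotProduct_map_mulVec (χ : ι → ℤ) (A : Matrix ι κ ℤ) (u : κ → 𝕜) :
    (fun j => (χ j : 𝕜)) ⬝ᵥ (A.map (↑) *ᵥ u) = (fun i => ((χ ᵥ* A) i : 𝕜)) ⬝ᵥ u := by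
  rw [dotProduct_mulVec]
  congr 1
  ext i
  exact ((Int.castRingHom 𝕜).map_vecMul A χ i).symm

lemma sum_abs_map_dotProduct_le (A : Matrix ι κ ℤ) (C : Matrix ι' κ ℤ)
    (h : ∀ χ : ι → ℤ, (∀ j, χ j = 1 ∨ χ j = -1) →
      ∃ χ' : ι' → ℤ, (∀ k, χ' k = 1 ∨ χ' k = -1) ∧ χ' ᵥ* C = χ ᵥ* A)
    (u : κ → 𝕜) :
    ∑ j, |A.map (↑) j ⬝ᵥ u| ≤ ∑ k, |C.map (↑) k ⬝ᵥ u| := by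
  classical
  set χ : ι → ℤ := fun j => if 0 ≤ A.map (↑) j ⬝ᵥ u then 1 else -1
  obtain ⟨χ', hχ', hχχ'⟩ := h χ fun j => by unfold χ; split_ifs <;> simp
  calc ∑ j, |A.map (↑) j ⬝ᵥ u| = (fun j => (χ j : 𝕜)) ⬝ᵥ (A.map (↑) *ᵥ u) := by
        refine Finset.sum_congr rfl fun j _ => ?_
        by_cases hj : 0 ≤ A.map (↑) j ⬝ᵥ u
        · simp only [χ, if_pos hj, Int.cast_one, one_mul]
          exact abs_of_nonneg hj
        · simp only [χ, if_neg hj, Int.cast_neg, Int.cast_one, neg_one_mul]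
          exact abs_of_neg (not_le.mp hj)
    _ = (fun k => (χ' k : 𝕜)) ⬝ᵥ (C.map (↑) *ᵥ u) := by
        rw [intCast_dotProduct_map_mulVec, intCast_dotProduct_map_mulVec, hχχ']
    _ ≤ ∑ k, |C.map (↑) k ⬝ᵥ u| := Finset.sum_le_sum fun k _ => by
        rcases hχ' k with h | h <;> simp only [h, Int.cast_one, one_mul, Int.cast_neg, neg_one_mul]
        exacts [le_abs_self _, neg_le_abs _]

end SignVectors

section ZeroOneVectors

variable {𝕜 κ : Type*} [Field 𝕜]

noncomputable def supportIndicator (w : κ → 𝕜) : κ → 𝕜 := (Function.support w).indicator 1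

lemma supportIndicator_smul {c : 𝕜} (hc : c ≠ 0) (w : κ → 𝕜) :
    supportIndicator (c • w) = supportIndicator w := by
  rw [supportIndicator, Function.support_const_smul_of_ne_zero c w hc, supportIndicator]

lemma supportIndicator_eq_self {v : κ → 𝕜} (hv : ∀ i, v i = 0 ∨ v i = 1) :
    supportIndicator v = v := by
  ext i
  rcases hv i with h | h <;> simp [supportIndicator, h]

lemma exists_eq_one_of_ne_zero {v : κ → 𝕜} (hv : ∀ i, v i = 0 ∨ v i = 1) (hv0 : v ≠ 0) :
    ∃ i, v i = 1 := by
  by_contra! h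
  exact hv0 (funext fun i => (hv i).resolve_right (h i))

lemma eq_of_eq_smul {v w : κ → 𝕜} (hv : ∀ i, v i = 0 ∨ v i = 1) (hw : ∀ i, w i = 0 ∨ w i = 1)
    (hw0 : w ≠ 0) {c : 𝕜} (h : w = c • v) : w = v := by
  have hc : c ≠ 0 := by
    rintro rfl
    exact hw0 (by rw [h, zero_smul])
  rw [← supportIndicator_eq_self hw, h, supportIndicator_smul hc, supportIndicator_eq_self hv]

end ZeroOneVectors

section ZeroOneRows

variable {ι ι' κ : Type*} [Fintype ι] [Fintype ι'] [Fintype κ]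

structure ZeroOneZonotopePair (P : ι → κ → ℚ) (Q : ι' → κ → ℚ) : Prop where
  zero_or_one : ∀ j i, P j i = 0 ∨ P j i = 1
  ne_zero : ∀ j, P j ≠ 0
  exists_intCast : ∀ k i, ∃ z : ℤ, Q k i = z
  sum_abs_dotProduct_eq : ∀ u, ∑ j, |P j ⬝ᵥ u| = ∑ k, |Q k ⬝ᵥ u|

namespace ZeroOneZonotopePair

variable {P : ι → κ → ℚ} {Q : ι' → κ → ℚ}

open Classical in
lemma exists_eq_intCast_smul_supportIndicator (h : ZeroOneZonotopePair P Q) {k : ι'}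
    (hk : Q k ≠ 0) :
    ∃ z : ℤ, Q k = (z : ℚ) • supportIndicator (Q k) ∧ ∃ j, P j = supportIndicator (Q k) := by
  have hpos : 0 < ∑ j with ∃ c : ℚ, P j = c • Q k, |P j ⬝ᵥ Q k| := by
    rw [sum_abs_dotProduct_parallel_eq P Q h.sum_abs_dotProduct_eq hk]
    refine Finset.sum_pos' (fun _ _ => abs_nonneg _) ⟨k, ?_, ?_⟩
    · exact Finset.mem_filter.mpr ⟨Finset.mem_univ k, 1, (one_smul ℚ _).symm⟩
    · exact abs_pos.mpr (dotProduct_self_eq_zero.not.mpr hk)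
  obtain ⟨j, hj, -⟩ := Finset.exists_ne_zero_of_sum_ne_zero hpos.ne'
  obtain ⟨c, hc⟩ := (Finset.mem_filter.mp hj).2
  have hc0 : c ≠ 0 := by
    rintro rfl
    exact h.ne_zero j (by rw [hc, zero_smul])
  have hQk : Q k = c⁻¹ • P j := by rw [hc, smul_smul, inv_mul_cancel₀ hc0, one_smul]
  have hpat : supportIndicator (Q k) = P j := by
    rw [hQk, supportIndicator_smul (inv_ne_zero hc0), supportIndicator_eq_self (h.zero_or_one j)]
  obtain ⟨i, hi⟩ := exists_eq_one_of_ne_zero (h.zero_or_one j) (h.ne_zero j)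
  obtain ⟨z, hz⟩ := h.exists_intCast k i
  have hcz : c⁻¹ = z := by simpa [hQk, hi] using hz
  refine ⟨z, ?_, j, hpat.symm⟩
  rw [hpat, ← hcz]
  exact hQk

lemma exists_eq_smul_iff_supportIndicator_eq (h : ZeroOneZonotopePair P Q) {k : ι'}
    (hk : Q k ≠ 0) (j₀ : ι) :
    (∃ c : ℚ, Q k = c • P j₀) ↔ supportIndicator (Q k) = P j₀ := by
  constructor
  · rintro ⟨c, hc⟩
    have hc0 : c ≠ 0 := by
      rintro rfl
      exact hk (by rw [hc, zero_smul])
    rw [hc, supportIndicator_smul hc0, supportIndicator_eq_self (h.zero_or_one j₀)]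
  · intro hpat
    obtain ⟨z, hQk, -⟩ := h.exists_eq_intCast_smul_supportIndicator hk
    exact ⟨z, hpat ▸ hQk⟩

open Classical Finset in
lemma card_mul_dotProduct_self_eq_sum (h : ZeroOneZonotopePair P Q) (j₀ : ι) :
    (#{j | P j = P j₀} : ℚ) * (P j₀ ⬝ᵥ P j₀) =
      ∑ k with Q k ≠ 0 ∧ supportIndicator (Q k) = P j₀, |Q k ⬝ᵥ P j₀| := by
  have hL : Finset.univ.filter (fun j => ∃ c : ℚ, P j = c • P j₀) =
      Finset.univ.filter (fun j => P j = P j₀) :=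
    Finset.filter_congr fun j _ =>
      ⟨fun ⟨_, hc⟩ => eq_of_eq_smul (h.zero_or_one j₀) (h.zero_or_one j) (h.ne_zero j) hc,
        fun hj => ⟨1, by rw [hj, one_smul]⟩⟩
  have hline := sum_abs_dotProduct_parallel_eq P Q h.sum_abs_dotProduct_eq (h.ne_zero j₀)
  rw [hL, Finset.sum_congr rfl fun j hj => by rw [(Finset.mem_filter.mp hj).2],
    Finset.sum_const, nsmul_eq_mul, abs_of_nonneg (dotProduct_self_nonneg _)] at hline
  rw [hline, Finset.sum_filter, Finset.sum_filter]
  refine Finset.sum_congr rfl fun k _ => ?_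
  by_cases hk : Q k = 0
  · simp [hk]
  · simp only [h.exists_eq_smul_iff_supportIndicator_eq hk, ne_eq, hk,
      not_false_eq_true, true_and]

open Classical Finset in
lemma sum_abs_dotProduct_supportIndicator_eq (h : ZeroOneZonotopePair P Q) :
    ∑ k with Q k ≠ 0, |Q k ⬝ᵥ supportIndicator (Q k)| = ∑ j, P j ⬝ᵥ P j := by
  have hmaps : ∀ k ∈ ({k | Q k ≠ 0} : Finset ι'), supportIndicator (Q k) ∈ univ.image P := by
    intro k hk
    obtain ⟨-, -, j, hj⟩ :=
      h.exists_eq_intCast_smul_supportIndicator (mem_filter.mp hk).2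
    exact mem_image.mpr ⟨j, mem_univ j, hj⟩
  rw [← sum_fiberwise_of_maps_to hmaps,
    ← sum_fiberwise_of_maps_to fun j _ => mem_image_of_mem P (mem_univ j)]
  refine sum_congr rfl fun v hv => ?_
  obtain ⟨j₀, -, rfl⟩ := mem_image.mp hv
  calc ∑ k ∈ {k | Q k ≠ 0} with supportIndicator (Q k) = P j₀, |Q k ⬝ᵥ supportIndicator (Q k)|
      = ∑ k with Q k ≠ 0 ∧ supportIndicator (Q k) = P j₀, |Q k ⬝ᵥ P j₀| := by
        rw [filter_filter]
        exact sum_congr rfl fun k hk => by rw [(mem_filter.mp hk).2.2]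
    _ = #{j | P j = P j₀} * (P j₀ ⬝ᵥ P j₀) :=
        (h.card_mul_dotProduct_self_eq_sum j₀).symm
    _ = ∑ j with P j = P j₀, P j ⬝ᵥ P j := by
        rw [sum_congr rfl fun j hj => by rw [(mem_filter.mp hj).2], sum_const, nsmul_eq_mul]

open Classical Finset in
lemma eq_or_eq_neg_supportIndicator (h : ZeroOneZonotopePair P Q)
    (htr : ∑ j, P j ⬝ᵥ P j = ∑ k, Q k ⬝ᵥ Q k) {k : ι'} (hk : Q k ≠ 0) :
    Q k = supportIndicator (Q k) ∨ Q k = -supportIndicator (Q k) := by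
  have hle : ∀ k ∈ ({k | Q k ≠ 0} : Finset ι'),
      |Q k ⬝ᵥ supportIndicator (Q k)| ≤ Q k ⬝ᵥ Q k := fun k hk => by
    obtain ⟨z, hQk, -⟩ := h.exists_eq_intCast_smul_supportIndicator (mem_filter.mp hk).2
    exact abs_dotProduct_le_of_eq_intCast_smul hQk
  have hsum : ∑ k with Q k ≠ 0, |Q k ⬝ᵥ supportIndicator (Q k)| =
      ∑ k with Q k ≠ 0, Q k ⬝ᵥ Q k := by
    rw [h.sum_abs_dotProduct_supportIndicator_eq, htr, sum_filter]
    exact sum_congr rfl fun k _ => by by_cases hk : Q k = 0 <;> simp [hk]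
  obtain ⟨z, hQk, -⟩ := h.exists_eq_intCast_smul_supportIndicator hk
  exact eq_or_eq_neg_of_abs_dotProduct_eq hQk hk
    ((sum_eq_sum_iff_of_le hle).mp hsum k (mem_filter.mpr ⟨mem_univ k, hk⟩))

open Classical Finset in
theorem exists_injective_eq_or_eq_neg (h : ZeroOneZonotopePair P Q)
    (htr : ∑ j, P j ⬝ᵥ P j = ∑ k, Q k ⬝ᵥ Q k) :
    ∃ θ : ι → ι', Function.Injective θ ∧ (∀ j, Q (θ j) = P j ∨ Q (θ j) = -P j) ∧
      ∀ k, k ∉ Set.range θ → Q k = 0 := by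
  have hsign {k : ι'} (hk : Q k ≠ 0) := h.eq_or_eq_neg_supportIndicator htr hk
  have hcard (v : κ → ℚ) : Fintype.card {j // P j = v} =
      Fintype.card {k : {k // Q k ≠ 0} // supportIndicator (Q k) = v} := by
    rw [Fintype.card_subtype, Fintype.card_congr (Equiv.subtypeSubtypeEquivSubtypeInter
      (fun k => Q k ≠ 0) (fun k => supportIndicator (Q k) = v)), Fintype.card_subtype]
    by_cases hv : ∃ j₀, P j₀ = v
    · obtain ⟨j₀, rfl⟩ := hv
      have hline := h.card_mul_dotProduct_self_eq_sum j₀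
      rw [sum_congr rfl fun k hk => ?_, sum_const, nsmul_eq_mul] at hline
      · exact_mod_cast mul_right_cancel₀ (dotProduct_self_eq_zero.not.mpr (h.ne_zero j₀)) hline
      obtain ⟨hk, hpat⟩ := (mem_filter.mp hk).2
      rcases hsign hk with hQk | hQk <;> rw [hQk, hpat]
      · exact abs_of_nonneg (dotProduct_self_nonneg _)
      · rw [neg_dotProduct, abs_neg, abs_of_nonneg (dotProduct_self_nonneg _)]
    · have hQv : ∀ k, Q k ≠ 0 → supportIndicator (Q k) ≠ v := fun k hk hpat => by
        obtain ⟨-, -, j, hj⟩ := h.exists_eq_intCast_smul_supportIndicator hk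
        exact hv ⟨j, hj.trans hpat⟩
      rw [card_eq_zero.mpr (filter_eq_empty_iff.mpr fun j _ hj => hv ⟨j, hj⟩),
        card_eq_zero.mpr (filter_eq_empty_iff.mpr fun k _ hk => hQv k hk.1 hk.2)]
  let e : ι ≃ {k // Q k ≠ 0} :=
    Equiv.ofFiberEquiv (f := P) (g := fun k => supportIndicator (Q k))
      fun v => Fintype.equivOfCardEq (hcard v)
  refine ⟨fun j => e j, Subtype.val_injective.comp e.injective, fun j => ?_, fun k hk => ?_⟩
  · rw [← Equiv.ofFiberEquiv_map (fun v => Fintype.equivOfCardEq (hcard v)) j]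
    exact hsign (e j).2
  · by_contra h0
    exact hk ⟨e.symm ⟨k, h0⟩, by simp⟩

end ZeroOneZonotopePair

end ZeroOneRows

theorem exists_transpose_mul_self_eq_one_and_eq_mul {R ι ι' κ : Type*} [Ring R] [Fintype ι]
    [Fintype ι'] [DecidableEq ι] (A : Matrix ι κ R) (C : Matrix ι' κ R) {θ : ι → ι'}
    (hθ : Function.Injective θ) (hrows : ∀ j, C (θ j) = A j ∨ C (θ j) = -A j)
    (hzero : ∀ k, k ∉ Set.range θ → C k = 0) :
    ∃ M : Matrix ι' ι R, Mᵀ * M = 1 ∧ C = M * A := by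
  classical
  set ε : ι → R := fun j => if C (θ j) = A j then 1 else -1
  have hε : ∀ j, C (θ j) = ε j • A j := fun j => by
    by_cases h : C (θ j) = A j
    · simp [ε, h]
    · simp [ε, (hrows j).resolve_left h]
  have hεε : ∀ j, ε j * ε j = 1 := fun j => by by_cases h : C (θ j) = A j <;> simp [ε, h]
  refine ⟨Matrix.of fun k j => if θ j = k then ε j else 0, ?_, ?_⟩
  · ext j j'
    simp only [Matrix.mul_apply, Matrix.transpose_apply, Matrix.of_apply, ite_mul, zero_mul,
      mul_ite, mul_zero, Finset.sum_ite_eq, Finset.mem_univ, if_true, hθ.eq_iff, Matrix.one_apply]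
    split_ifs with h
    · rw [h, hεε]
    · rfl
  · ext k i
    simp only [Matrix.mul_apply, Matrix.of_apply, ite_mul, zero_mul]
    by_cases hk : k ∈ Set.range θ
    · obtain ⟨j₀, rfl⟩ := hk
      simp [hθ.eq_iff, hε]
    · rw [hzero k hk]
      exact (Finset.sum_eq_zero fun j _ => if_neg fun h => hk ⟨j, h⟩).symm

section CharacteristicCovectors

variable {ι ι' κ : Type} [Fintype ι] [Fintype ι'] [Fintype κ] [DecidableEq κ]
  {B : Matrix κ κ ℤ}

lemma mem_span_intVecs (x : κ → ℚ) : x ∈ Submodule.span ℚ (intVecs κ) := by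
  refine Submodule.span_mono ?_ ((Pi.basisFun ℚ κ).span_eq ▸ Submodule.mem_top (x := x))
  rintro _ ⟨i, rfl⟩ j
  exact ⟨if i = j then 1 else 0, by simp [Pi.single_apply, eq_comm, apply_ite (Int.cast : ℤ → ℚ)]⟩

lemma exists_mem_dualOf_qform_eq (hpos : ∀ x : κ → ℚ, x ≠ 0 → 0 < qform B x x) (w : κ → ℤ) :
    ∃ ξ ∈ dualOf B (intVecs κ),
      ∀ y : κ → ℤ, ((w ⬝ᵥ y : ℤ) : ℚ) = qform B ξ (fun i => (y i : ℚ)) := by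
  have hinj : Function.Injective (Matrix.vecMulLinear (B.map (Int.cast : ℤ → ℚ))) := by
    rw [← LinearMap.ker_eq_bot, LinearMap.ker_eq_bot']
    intro x hx
    by_contra hx0
    have := hpos x hx0
    rw [qform, dotProduct_mulVec, show x ᵥ* B.map Int.cast = 0 from hx, zero_dotProduct] at this
    exact lt_irrefl 0 this
  obtain ⟨ξ, hξ⟩ := LinearMap.injective_iff_surjective.mp hinj fun i => (w i : ℚ)
  have hform (y : κ → ℚ) : qform B ξ y = (fun i => (w i : ℚ)) ⬝ᵥ y := by
    rw [qform, dotProduct_mulVec]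
    exact congrArg (· ⬝ᵥ y) hξ
  refine ⟨ξ, ⟨mem_span_intVecs ξ, fun y hy => ?_⟩, fun y => ?_⟩
  · choose z hz using hy
    refine ⟨w ⬝ᵥ z, ?_⟩
    rw [hform, funext hz]
    push_cast [dotProduct]
    rfl
  · rw [hform]
    push_cast [dotProduct]
    rfl

lemma exists_sign_vecMul_eq (A : Matrix ι κ ℤ) (C : Matrix ι' κ ℤ)
    (hpos : ∀ x : κ → ℚ, x ≠ 0 → 0 < qform B x x)
    (hinto : ∀ χ : ι → ℤ, (∀ j, χ j = 1 ∨ χ j = -1) →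
      ∀ ξ ∈ dualOf B (intVecs κ),
        (∀ y : κ → ℤ, ((χ ⬝ᵥ (A *ᵥ y) : ℤ) : ℚ) = qform B ξ (fun k => (y k : ℚ))) →
        ξ ∈ ShortOf B (intVecs κ))
    (hsurj : ∀ ξ ∈ ShortOf B (intVecs κ), ∃ χ : ι' → ℤ,
      (∀ j, χ j = 1 ∨ χ j = -1) ∧
      ∀ y : κ → ℤ, ((χ ⬝ᵥ (C *ᵥ y) : ℤ) : ℚ) = qform B ξ (fun k => (y k : ℚ)))
    (χ : ι → ℤ) (hχ : ∀ j, χ j = 1 ∨ χ j = -1) :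
    ∃ χ' : ι' → ℤ, (∀ k, χ' k = 1 ∨ χ' k = -1) ∧ χ' ᵥ* C = χ ᵥ* A := by
  obtain ⟨ξ, hξ, hrepr⟩ := exists_mem_dualOf_qform_eq hpos (χ ᵥ* A)
  have hχξ (y : κ → ℤ) : ((χ ⬝ᵥ (A *ᵥ y) : ℤ) : ℚ) = qform B ξ (fun k => (y k : ℚ)) := by
    rw [dotProduct_mulVec]
    exact hrepr y
  obtain ⟨χ', hχ', hχ'ξ⟩ := hsurj ξ (hinto χ hχ ξ hξ hχξ)
  refine ⟨χ', hχ', funext fun i => ?_⟩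
  have h := (hχ'ξ (Pi.single i 1)).trans (hχξ (Pi.single i 1)).symm
  exact (by simpa using h : χ' ⬝ᵥ C.col i = χ ⬝ᵥ A.col i)

end CharacteristicCovectors

lemma sum_map_dotProduct_self {ι κ : Type*} [Fintype ι] [Fintype κ] (A : Matrix ι κ ℤ) :
    ∑ j, A.map (Int.cast : ℤ → ℚ) j ⬝ᵥ A.map (↑) j = ((Aᵀ * A).trace : ℚ) := by
  simp only [Matrix.trace, Matrix.diag, Matrix.mul_apply, Matrix.transpose_apply, dotProduct,
    Matrix.map_apply]
  push_cast
  exact Finset.sum_comm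

/-- Under the rigid-embedding hypotheses, there is an isometric
embedding `ι : Z₁ → Z₂` with `ι₂ = ι ∘ ι₁`. -/
theorem stmt_12 (n m₁ m₂ : ℕ) (B : Matrix (Fin n) (Fin n) ℤ)
    (A₁ : Matrix (Fin m₁) (Fin n) ℤ) (A₂ : Matrix (Fin m₂) (Fin n) ℤ)
    (hpos : ∀ x : Fin n → ℚ, x ≠ 0 → 0 < qform B x x)
    (hA₁ : A₁ᵀ * A₁ = B) (hA₂ : A₂ᵀ * A₂ = B)
    (h01 : ∀ j k, A₁ j k = 0 ∨ A₁ j k = 1)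
    (hfull : ∀ j, ∃ k, A₁ j k ≠ 0)
    (hinto₁ : ∀ χ : Fin m₁ → ℤ, (∀ j, χ j = 1 ∨ χ j = -1) →
      ∀ ξ ∈ dualOf B (intVecs (Fin n)),
        (∀ y : Fin n → ℤ, ((χ ⬝ᵥ (A₁ *ᵥ y) : ℤ) : ℚ) = qform B ξ (fun k => (y k : ℚ))) →
        ξ ∈ ShortOf B (intVecs (Fin n)))
    (hinto₂ : ∀ χ : Fin m₂ → ℤ, (∀ j, χ j = 1 ∨ χ j = -1) →
      ∀ ξ ∈ dualOf B (intVecs (Fin n)),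
        (∀ y : Fin n → ℤ, ((χ ⬝ᵥ (A₂ *ᵥ y) : ℤ) : ℚ) = qform B ξ (fun k => (y k : ℚ))) →
        ξ ∈ ShortOf B (intVecs (Fin n)))
    (hsurj₁ : ∀ ξ ∈ ShortOf B (intVecs (Fin n)), ∃ χ : Fin m₁ → ℤ,
      (∀ j, χ j = 1 ∨ χ j = -1) ∧
      ∀ y : Fin n → ℤ, ((χ ⬝ᵥ (A₁ *ᵥ y) : ℤ) : ℚ) = qform B ξ (fun k => (y k : ℚ)))
    (hsurj₂ : ∀ ξ ∈ ShortOf B (intVecs (Fin n)), ∃ χ : Fin m₂ → ℤ,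
      (∀ j, χ j = 1 ∨ χ j = -1) ∧
      ∀ y : Fin n → ℤ, ((χ ⬝ᵥ (A₂ *ᵥ y) : ℤ) : ℚ) = qform B ξ (fun k => (y k : ℚ))) :
    ∃ M : Matrix (Fin m₂) (Fin m₁) ℤ, Mᵀ * M = 1 ∧ A₂ = M * A₁ := by
  have hsupp (u : Fin n → ℚ) : ∑ j, |A₁.map (↑) j ⬝ᵥ u| = ∑ k, |A₂.map (↑) k ⬝ᵥ u| :=
    le_antisymm (sum_abs_map_dotProduct_le A₁ A₂ (exists_sign_vecMul_eq A₁ A₂ hpos hinto₁ hsurj₂) u)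
      (sum_abs_map_dotProduct_le A₂ A₁ (exists_sign_vecMul_eq A₂ A₁ hpos hinto₂ hsurj₁) u)
  have htr : ∑ j, A₁.map (Int.cast : ℤ → ℚ) j ⬝ᵥ A₁.map (↑) j =
      ∑ k, A₂.map (Int.cast : ℤ → ℚ) k ⬝ᵥ A₂.map (↑) k := by
    rw [sum_map_dotProduct_self, sum_map_dotProduct_self, hA₁, hA₂]
  have hpair : ZeroOneZonotopePair (A₁.map (Int.cast : ℤ → ℚ)) (A₂.map (↑)) :=
    ⟨fun j i => by rcases h01 j i with h | h <;> simp [h],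
      fun j hj => (hfull j).elim fun i hi => hi (by simpa using congrFun hj i),
      fun k i => ⟨A₂ k i, rfl⟩, hsupp⟩
  obtain ⟨θ, hθ, hrows, hzero⟩ := hpair.exists_injective_eq_or_eq_neg htr
  refine exists_transpose_mul_self_eq_one_and_eq_mul A₁ A₂ hθ (fun j => ?_) fun k hk => ?_
  · refine (hrows j).imp (fun h => funext fun i => ?_) fun h => funext fun i => ?_ <;>
    · have hi := congrFun h i
      simp only [Matrix.map_apply, Pi.neg_apply] at hi
      exact_mod_cast hi
  · exact funext fun i => by simpa using congrFun (hzero k hk) i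

end Greene
end

section
/- Under the rigid-embedding hypotheses, |⟨ι₂(x), f⟩| ∈ {0,1} for every x ∈ B_Λ and f ∈ B₂; in particular, |x| = |supp(ι₁(x))| = |supp(ι₂(x))| for every x ∈ B_Λ. -/
set_option linter.unusedSectionVars false

open Matrix BigOperators

namespace Greene

private lemma aux_nonneg (a s : ℤ) (hs : s = 1 ∨ s = -1) : 0 ≤ a * (a - s) := by
  rcases hs with rfl | rfl
  · rcases le_or_gt 1 a with h | h
    · exact mul_nonneg (by omega) (by omega)
    · have h2 := mul_nonneg (show (0:ℤ) ≤ -a by omega) (show (0:ℤ) ≤ -(a - 1) by omega)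
      nlinarith [h2]
  · rcases le_or_gt 0 a with h | h
    · exact mul_nonneg (by omega) (by omega)
    · have h2 := mul_nonneg (show (0:ℤ) ≤ -a by omega) (show (0:ℤ) ≤ -(a - -1) by omega)
      nlinarith [h2]

/-- Under the rigid-embedding hypotheses, `|⟨ι₂ x, f⟩| ∈ {0,1}` for
every `x ∈ B_Λ`, `f ∈ B₂`; in particular `|x| = |supp(ι₁ x)| = |supp(ι₂ x)|`. -/
theorem stmt_13 (n m₁ m₂ : ℕ) (B : Matrix (Fin n) (Fin n) ℤ)
    (A₁ : Matrix (Fin m₁) (Fin n) ℤ) (A₂ : Matrix (Fin m₂) (Fin n) ℤ)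
    (hpos : ∀ x : Fin n → ℚ, x ≠ 0 → 0 < qform B x x)
    (hA₁ : A₁ᵀ * A₁ = B) (hA₂ : A₂ᵀ * A₂ = B)
    (h01 : ∀ j k, A₁ j k = 0 ∨ A₁ j k = 1)
    (hfull : ∀ j, ∃ k, A₁ j k ≠ 0)
    (hinto₁ : ∀ χ : Fin m₁ → ℤ, (∀ j, χ j = 1 ∨ χ j = -1) →
      ∀ ξ ∈ dualOf B (intVecs (Fin n)),
        (∀ y : Fin n → ℤ, ((χ ⬝ᵥ (A₁ *ᵥ y) : ℤ) : ℚ) = qform B ξ (fun k => (y k : ℚ))) →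
        ξ ∈ ShortOf B (intVecs (Fin n)))
    (hinto₂ : ∀ χ : Fin m₂ → ℤ, (∀ j, χ j = 1 ∨ χ j = -1) →
      ∀ ξ ∈ dualOf B (intVecs (Fin n)),
        (∀ y : Fin n → ℤ, ((χ ⬝ᵥ (A₂ *ᵥ y) : ℤ) : ℚ) = qform B ξ (fun k => (y k : ℚ))) →
        ξ ∈ ShortOf B (intVecs (Fin n)))
    (hsurj₁ : ∀ ξ ∈ ShortOf B (intVecs (Fin n)), ∃ χ : Fin m₁ → ℤ,
      (∀ j, χ j = 1 ∨ χ j = -1) ∧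
      ∀ y : Fin n → ℤ, ((χ ⬝ᵥ (A₁ *ᵥ y) : ℤ) : ℚ) = qform B ξ (fun k => (y k : ℚ)))
    (hsurj₂ : ∀ ξ ∈ ShortOf B (intVecs (Fin n)), ∃ χ : Fin m₂ → ℤ,
      (∀ j, χ j = 1 ∨ χ j = -1) ∧
      ∀ y : Fin n → ℤ, ((χ ⬝ᵥ (A₂ *ᵥ y) : ℤ) : ℚ) = qform B ξ (fun k => (y k : ℚ))) :
    (∀ j k, A₂ j k = 0 ∨ A₂ j k = 1 ∨ A₂ j k = -1) ∧
    (∀ k, B k k = ((Finset.univ.filter fun j => A₁ j k ≠ 0).card : ℤ) ∧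
          B k k = ((Finset.univ.filter fun j => A₂ j k ≠ 0).card : ℤ)) := by
  classical
  set Bq := B.map (Int.cast : ℤ → ℚ) with hBqdef
  have hBsymm : Bᵀ = B := by
    rw [← hA₁, Matrix.transpose_mul, Matrix.transpose_transpose]
  have hBqsymm : Bqᵀ = Bq := by
    ext i j
    have h := congrFun (congrFun hBsymm i) j
    simp only [Matrix.transpose_apply] at h
    simp only [hBqdef, Matrix.transpose_apply, Matrix.map_apply, h]
  have hinj : Function.Injective Bq.mulVecLin := by
    rw [← LinearMap.ker_eq_bot, LinearMap.ker_eq_bot']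
    intro x hx
    by_contra hne
    have hx' : Bq *ᵥ x = 0 := hx
    have h0 : qform B x x = 0 := by
      show x ⬝ᵥ (Bq *ᵥ x) = 0
      rw [hx']; simp
    exact (hpos x hne).ne' h0
  obtain ⟨ξ, hξ⟩ := (LinearMap.injective_iff_surjective.mp hinj)
    (fun k => ((∑ j, A₁ j k : ℤ) : ℚ))
  have hξ' : Bq *ᵥ ξ = fun k => ((∑ j, A₁ j k : ℤ) : ℚ) := hξ
  have key : ∀ y : Fin n → ℚ,
      qform B ξ y = (fun k => ((∑ j, A₁ j k : ℤ) : ℚ)) ⬝ᵥ y := by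
    intro y
    show ξ ⬝ᵥ (Bq *ᵥ y) = _
    rw [Matrix.dotProduct_mulVec, ← hBqsymm, Matrix.vecMul_transpose, hξ']
  have hspan : ∀ x : Fin n → ℚ, x ∈ Submodule.span ℚ (intVecs (Fin n)) := by
    intro x
    rw [pi_eq_sum_univ x]
    refine Submodule.sum_mem _ fun i _ => Submodule.smul_mem _ _ (Submodule.subset_span ?_)
    intro j
    by_cases h : i = j
    · exact ⟨1, by simp [h]⟩
    · exact ⟨0, by simp [h]⟩
  have hdual : ξ ∈ dualOf B (intVecs (Fin n)) := by
    refine ⟨hspan ξ, ?_⟩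
    intro y hy
    choose c hc using hy
    refine ⟨∑ k, (∑ j, A₁ j k) * c k, ?_⟩
    rw [key y]
    simp only [dotProduct]
    push_cast
    exact Finset.sum_congr rfl fun k _ => by rw [hc k]
  have hlift : ∀ y : Fin n → ℤ,
      (((fun _ => (1:ℤ)) ⬝ᵥ (A₁ *ᵥ y) : ℤ) : ℚ) = qform B ξ (fun k => (y k : ℚ)) := by
    intro y
    rw [key]
    simp only [dotProduct, Matrix.mulVec, one_mul]
    push_cast
    rw [Finset.sum_comm]
    exact Finset.sum_congr rfl fun k _ => by rw [Finset.sum_mul]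
  have hshort : ξ ∈ ShortOf B (intVecs (Fin n)) :=
    hinto₁ (fun _ => 1) (fun j => Or.inl rfl) ξ hdual hlift
  obtain ⟨χ₂, hpm, hχ₂⟩ := hsurj₂ ξ hshort
  have hcol : ∀ k, ∑ j, χ₂ j * A₂ j k = ∑ j, A₁ j k := by
    intro k
    have h := hχ₂ (fun l => if l = k then 1 else 0)
    rw [key] at h
    have hL : (χ₂ ⬝ᵥ (A₂ *ᵥ fun l => if l = k then (1:ℤ) else 0)) = ∑ j, χ₂ j * A₂ j k := by
      simp [dotProduct, Matrix.mulVec, mul_ite]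
    have hR : ((fun k' => ((∑ j, A₁ j k' : ℤ) : ℚ)) ⬝ᵥ
        fun l => (((if l = k then (1:ℤ) else 0) : ℤ) : ℚ)) = ((∑ j, A₁ j k : ℤ) : ℚ) := by
      simp [dotProduct, apply_ite (Int.cast : ℤ → ℚ), mul_ite]
    rw [hL, hR] at h
    exact_mod_cast h
  have hBkk1 : ∀ k, B k k = ∑ j, A₁ j k * A₁ j k := by
    intro k; rw [← hA₁]; simp [Matrix.mul_apply]
  have hBkk2 : ∀ k, B k k = ∑ j, A₂ j k * A₂ j k := by
    intro k; rw [← hA₂]; simp [Matrix.mul_apply]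
  have hA1ind : ∀ k, ∑ j, A₁ j k * A₁ j k = ∑ j, A₁ j k :=
    fun k => Finset.sum_congr rfl fun j _ => by rcases h01 j k with h | h <;> rw [h] <;> ring
  have hterm : ∀ k j, A₂ j k * (A₂ j k - χ₂ j) = 0 := by
    intro k
    have hsum : ∑ j, A₂ j k * (A₂ j k - χ₂ j) = 0 := by
      have e1 : ∑ j, A₂ j k * (A₂ j k - χ₂ j)
          = ∑ j, A₂ j k * A₂ j k - ∑ j, χ₂ j * A₂ j k := by
        rw [← Finset.sum_sub_distrib]
        exact Finset.sum_congr rfl fun j _ => by ring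
      rw [e1, ← hBkk2 k, hcol k, ← hA1ind k, ← hBkk1 k, sub_self]
    have hnn : ∀ j ∈ Finset.univ, (0:ℤ) ≤ A₂ j k * (A₂ j k - χ₂ j) :=
      fun j _ => aux_nonneg _ _ (hpm j)
    exact fun j => (Finset.sum_eq_zero_iff_of_nonneg hnn).mp hsum j (Finset.mem_univ j)
  have hsmall : ∀ j k, A₂ j k = 0 ∨ A₂ j k = 1 ∨ A₂ j k = -1 := by
    intro j k
    rcases mul_eq_zero.mp (hterm k j) with h0 | h1
    · exact Or.inl h0
    · rcases hpm j with hs | hs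
      · exact Or.inr (Or.inl (by omega))
      · exact Or.inr (Or.inr (by omega))
  refine ⟨hsmall, fun k => ⟨?_, ?_⟩⟩
  · rw [hBkk1 k]
    have : ∀ j, A₁ j k * A₁ j k = if A₁ j k ≠ 0 then (1:ℤ) else 0 := by
      intro j; rcases h01 j k with h | h <;> simp [h]
    rw [Finset.sum_congr rfl fun j _ => this j, Finset.card_filter]
    push_cast
    exact Finset.sum_congr rfl fun j _ => by by_cases h : A₁ j k = 0 <;> simp [h]
  · rw [hBkk2 k]
    have : ∀ j, A₂ j k * A₂ j k = if A₂ j k ≠ 0 then (1:ℤ) else 0 := by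
      intro j; rcases hsmall j k with h | h | h <;> simp [h]
    rw [Finset.sum_congr rfl fun j _ => this j, Finset.card_filter]
    push_cast
    exact Finset.sum_congr rfl fun j _ => by by_cases h : A₂ j k = 0 <;> simp [h]


end Greene
end

section
/- Under the rigid-embedding hypotheses, ⟨x, y⟩ = |supp(ι₁(x)) ∩ supp(ι₁(y))| = |supp(ι₂(x)) ∩ supp(ι₂(y))| for all x, y ∈ B_Λ. -/
set_option linter.unusedSectionVars false

open Matrix BigOperators

namespace Greene

section Stmt14Aux

lemma span_intVecs_top (n : ℕ) : Submodule.span ℚ (intVecs (Fin n)) = ⊤ := by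
  rw [eq_top_iff]
  intro x _
  rw [pi_eq_sum_univ x]
  refine Submodule.sum_mem _ fun i _ => Submodule.smul_mem _ _ (Submodule.subset_span ?_)
  intro j
  refine ⟨if i = j then 1 else 0, ?_⟩
  split <;> simp_all

lemma int_mul_self_sub_sign (a c : ℤ) (hc : c = 1 ∨ c = -1) : 0 ≤ a * (a - c) := by
  rcases hc with rfl | rfl
  · rcases le_or_gt a 0 with h | h
    · exact mul_nonneg_iff.mpr (Or.inr ⟨h, by omega⟩)
    · exact mul_nonneg (by omega) (by omega)
  · rcases le_or_gt 0 a with h | h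
    · exact mul_nonneg h (by omega)
    · exact mul_nonneg_iff.mpr (Or.inr ⟨le_of_lt h, by omega⟩)

end Stmt14Aux

/-- Under the rigid-embedding hypotheses,
`⟨x,y⟩ = |supp(ι₁ x) ∩ supp(ι₁ y)| = |supp(ι₂ x) ∩ supp(ι₂ y)|` for `x, y ∈ B_Λ`. -/
theorem stmt_14 (n m₁ m₂ : ℕ) (B : Matrix (Fin n) (Fin n) ℤ)
    (A₁ : Matrix (Fin m₁) (Fin n) ℤ) (A₂ : Matrix (Fin m₂) (Fin n) ℤ)
    (hpos : ∀ x : Fin n → ℚ, x ≠ 0 → 0 < qform B x x)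
    (hA₁ : A₁ᵀ * A₁ = B) (hA₂ : A₂ᵀ * A₂ = B)
    (h01 : ∀ j k, A₁ j k = 0 ∨ A₁ j k = 1)
    (hfull : ∀ j, ∃ k, A₁ j k ≠ 0)
    (hinto₁ : ∀ χ : Fin m₁ → ℤ, (∀ j, χ j = 1 ∨ χ j = -1) →
      ∀ ξ ∈ dualOf B (intVecs (Fin n)),
        (∀ y : Fin n → ℤ, ((χ ⬝ᵥ (A₁ *ᵥ y) : ℤ) : ℚ) = qform B ξ (fun k => (y k : ℚ))) →
        ξ ∈ ShortOf B (intVecs (Fin n)))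
    (hinto₂ : ∀ χ : Fin m₂ → ℤ, (∀ j, χ j = 1 ∨ χ j = -1) →
      ∀ ξ ∈ dualOf B (intVecs (Fin n)),
        (∀ y : Fin n → ℤ, ((χ ⬝ᵥ (A₂ *ᵥ y) : ℤ) : ℚ) = qform B ξ (fun k => (y k : ℚ))) →
        ξ ∈ ShortOf B (intVecs (Fin n)))
    (hsurj₁ : ∀ ξ ∈ ShortOf B (intVecs (Fin n)), ∃ χ : Fin m₁ → ℤ,
      (∀ j, χ j = 1 ∨ χ j = -1) ∧
      ∀ y : Fin n → ℤ, ((χ ⬝ᵥ (A₁ *ᵥ y) : ℤ) : ℚ) = qform B ξ (fun k => (y k : ℚ)))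
    (hsurj₂ : ∀ ξ ∈ ShortOf B (intVecs (Fin n)), ∃ χ : Fin m₂ → ℤ,
      (∀ j, χ j = 1 ∨ χ j = -1) ∧
      ∀ y : Fin n → ℤ, ((χ ⬝ᵥ (A₂ *ᵥ y) : ℤ) : ℚ) = qform B ξ (fun k => (y k : ℚ))) :
    ∀ k l, B k l = ((Finset.univ.filter fun j => A₁ j k ≠ 0 ∧ A₁ j l ≠ 0).card : ℤ) ∧
           B k l = ((Finset.univ.filter fun j => A₂ j k ≠ 0 ∧ A₂ j l ≠ 0).card : ℤ) := by
  classical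
  -- abbreviations
  set Q : Matrix (Fin n) (Fin n) ℚ := B.map (Int.cast : ℤ → ℚ) with hQ
  have hBsymm : Bᵀ = B := by rw [← hA₁, Matrix.transpose_mul, Matrix.transpose_transpose]
  have hQsymm : Qᵀ = Q := by rw [hQ, ← Matrix.transpose_map, hBsymm]
  have hQdet : Q.det ≠ 0 := by
    intro hdet
    obtain ⟨v, hv0, hv⟩ := Matrix.exists_mulVec_eq_zero_iff.mpr hdet
    have := hpos v hv0
    rw [qform, ← hQ, hv] at this
    simp at this
  -- the covector ξ = B⁻¹ A₁ᵀ 𝟙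
  set w : Fin n → ℚ := fun k => ((∑ j, A₁ j k : ℤ) : ℚ) with hw
  set ξ : Fin n → ℚ := Q⁻¹ *ᵥ w with hξ
  have hQξ : Q *ᵥ ξ = w := by
    rw [hξ, Matrix.mulVec_mulVec, Matrix.mul_nonsing_inv _ (isUnit_iff_ne_zero.mpr hQdet),
      Matrix.one_mulVec]
  have hform : ∀ y : Fin n → ℚ, qform B ξ y = w ⬝ᵥ y := by
    intro y
    rw [qform, ← hQ, Matrix.dotProduct_mulVec, ← hQsymm, Matrix.vecMul_transpose, hQξ]
  -- ξ is in the dual lattice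
  have hdual : ξ ∈ dualOf B (intVecs (Fin n)) := by
    refine ⟨by rw [span_intVecs_top]; trivial, fun y hy => ?_⟩
    choose m hm using hy
    refine ⟨∑ k, (∑ j, A₁ j k) * m k, ?_⟩
    rw [hform]
    simp only [dotProduct, hw]
    push_cast
    exact Finset.sum_congr rfl fun k _ => by rw [hm k]
  -- ξ is short, via the all-ones characteristic covector of Z₁
  have hshort : ξ ∈ ShortOf B (intVecs (Fin n)) := by
    refine hinto₁ (fun _ => 1) (fun j => Or.inl rfl) ξ hdual fun y => ?_
    rw [hform]
    simp only [dotProduct, Matrix.mulVec, dotProduct, hw, one_mul]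
    push_cast
    rw [Finset.sum_comm]
    exact Finset.sum_congr rfl fun k _ => by rw [Finset.sum_mul]
  -- lift ξ through the second embedding
  obtain ⟨χ, hχpm, hχ⟩ := hsurj₂ ξ hshort
  -- the key column identity : ∑ⱼ χⱼ A₂ⱼₖ = ∑ⱼ A₁ⱼₖ
  have key : ∀ k, ∑ j, χ j * A₂ j k = ∑ j, A₁ j k := by
    intro k
    have h := hχ (Pi.single k 1)
    rw [hform] at h
    have hL : (χ ⬝ᵥ (A₂ *ᵥ Pi.single k 1) : ℤ) = ∑ j, χ j * A₂ j k := by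
      simp [dotProduct, Matrix.mulVec_single]
    have hR : (w ⬝ᵥ fun i => (((Pi.single k 1 : Fin n → ℤ)) i : ℚ)) = ((∑ j, A₁ j k : ℤ) : ℚ) := by
      simp only [dotProduct, Pi.single_apply]
      rw [Finset.sum_eq_single k]
      · simp [hw]
      · intro b _ hb; simp [hb]
      · intro hk; exact absurd (Finset.mem_univ k) hk
    rw [hL, hR] at h
    exact_mod_cast h
  -- diagonal comparison : ∑ⱼ A₂ⱼₖ² = ∑ⱼ A₁ⱼₖ
  have hdiag : ∀ k, ∑ j, A₂ j k * A₂ j k = ∑ j, A₁ j k := by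
    intro k
    have h1 : (A₁ᵀ * A₁) k k = ∑ j, A₁ j k * A₁ j k := by
      simp [Matrix.mul_apply, Matrix.transpose_apply]
    have h2 : (A₂ᵀ * A₂) k k = ∑ j, A₂ j k * A₂ j k := by
      simp [Matrix.mul_apply, Matrix.transpose_apply]
    have h3 : ∑ j, A₁ j k * A₁ j k = ∑ j, A₁ j k :=
      Finset.sum_congr rfl fun j _ => by rcases h01 j k with h | h <;> rw [h] <;> ring
    calc ∑ j, A₂ j k * A₂ j k = (A₂ᵀ * A₂) k k := h2.symm
      _ = (A₁ᵀ * A₁) k k := by rw [hA₁, hA₂]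
      _ = ∑ j, A₁ j k * A₁ j k := h1
      _ = ∑ j, A₁ j k := h3
  -- termwise : each A₂ⱼₖ ∈ {0, χⱼ}
  have halt : ∀ j k, A₂ j k = 0 ∨ A₂ j k = χ j := by
    intro j k
    have hsum : ∑ j, A₂ j k * (A₂ j k - χ j) = 0 := by
      have : ∑ j, A₂ j k * (A₂ j k - χ j)
          = (∑ j, A₂ j k * A₂ j k) - ∑ j, χ j * A₂ j k := by
        rw [← Finset.sum_sub_distrib]
        exact Finset.sum_congr rfl fun j _ => by ring
      rw [this, hdiag k, key k, sub_self]
    have hterm := (Finset.sum_eq_zero_iff_of_nonneg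
      (fun j _ => int_mul_self_sub_sign (A₂ j k) (χ j) (hχpm j))).mp hsum j (Finset.mem_univ j)
    rcases mul_eq_zero.mp hterm with h | h
    · exact Or.inl h
    · exact Or.inr (by omega)
  -- conclusion
  intro k l
  constructor
  · have h1 : B k l = ∑ j, A₁ j k * A₁ j l := by
      rw [← hA₁]; simp [Matrix.mul_apply, Matrix.transpose_apply]
    rw [h1, ← Finset.sum_boole]
    refine Finset.sum_congr rfl fun j _ => ?_
    rcases h01 j k with h | h <;> rcases h01 j l with h' | h' <;> simp [h, h']
  · have h2 : B k l = ∑ j, A₂ j k * A₂ j l := by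
      rw [← hA₂]; simp [Matrix.mul_apply, Matrix.transpose_apply]
    rw [h2, ← Finset.sum_boole]
    refine Finset.sum_congr rfl fun j _ => ?_
    rcases halt j k with h | h <;> rcases halt j l with h' | h' <;>
      rcases hχpm j with hc | hc <;> simp [h, h', hc]


end Greene
end

section
/- Under the rigid-embedding hypotheses, Z₂ admits an orthonormal basis B₂' such that ⟨ι₂(x), f⟩ ∈ {0,1} for every x ∈ B_Λ and f ∈ B₂'. -/
set_option linter.unusedSectionVars false

open Matrix BigOperators

namespace Greene

lemma gram_dot' {m n : ℕ} (A : Matrix (Fin m) (Fin n) ℤ) (y : Fin n → ℤ) :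
    (A *ᵥ y) ⬝ᵥ (A *ᵥ y) = ((Aᵀ * A) *ᵥ y) ⬝ᵥ y := by
  rw [Matrix.dotProduct_mulVec, ← Matrix.mulVec_transpose, Matrix.mulVec_mulVec]


/-- Under the rigid-embedding hypotheses, `Z₂` admits an orthonormal
basis `B₂'` with `⟨ι₂ x, f⟩ ∈ {0,1}` for every `x ∈ B_Λ`, `f ∈ B₂'`. -/
theorem stmt_15 (n m₁ m₂ : ℕ) (B : Matrix (Fin n) (Fin n) ℤ)
    (A₁ : Matrix (Fin m₁) (Fin n) ℤ) (A₂ : Matrix (Fin m₂) (Fin n) ℤ)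
    (hpos : ∀ x : Fin n → ℚ, x ≠ 0 → 0 < qform B x x)
    (hA₁ : A₁ᵀ * A₁ = B) (hA₂ : A₂ᵀ * A₂ = B)
    (h01 : ∀ j k, A₁ j k = 0 ∨ A₁ j k = 1)
    (hfull : ∀ j, ∃ k, A₁ j k ≠ 0)
    (hinto₁ : ∀ χ : Fin m₁ → ℤ, (∀ j, χ j = 1 ∨ χ j = -1) →
      ∀ ξ ∈ dualOf B (intVecs (Fin n)),
        (∀ y : Fin n → ℤ, ((χ ⬝ᵥ (A₁ *ᵥ y) : ℤ) : ℚ) = qform B ξ (fun k => (y k : ℚ))) →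
        ξ ∈ ShortOf B (intVecs (Fin n)))
    (hinto₂ : ∀ χ : Fin m₂ → ℤ, (∀ j, χ j = 1 ∨ χ j = -1) →
      ∀ ξ ∈ dualOf B (intVecs (Fin n)),
        (∀ y : Fin n → ℤ, ((χ ⬝ᵥ (A₂ *ᵥ y) : ℤ) : ℚ) = qform B ξ (fun k => (y k : ℚ))) →
        ξ ∈ ShortOf B (intVecs (Fin n)))
    (hsurj₁ : ∀ ξ ∈ ShortOf B (intVecs (Fin n)), ∃ χ : Fin m₁ → ℤ,
      (∀ j, χ j = 1 ∨ χ j = -1) ∧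
      ∀ y : Fin n → ℤ, ((χ ⬝ᵥ (A₁ *ᵥ y) : ℤ) : ℚ) = qform B ξ (fun k => (y k : ℚ)))
    (hsurj₂ : ∀ ξ ∈ ShortOf B (intVecs (Fin n)), ∃ χ : Fin m₂ → ℤ,
      (∀ j, χ j = 1 ∨ χ j = -1) ∧
      ∀ y : Fin n → ℤ, ((χ ⬝ᵥ (A₂ *ᵥ y) : ℤ) : ℚ) = qform B ξ (fun k => (y k : ℚ))) :
    ∃ U : Matrix (Fin m₂) (Fin m₂) ℤ, Uᵀ * U = 1 ∧
      ∀ j k, (Uᵀ * A₂) j k = 0 ∨ (Uᵀ * A₂) j k = 1 := by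
  classical
  set Bq : Matrix (Fin n) (Fin n) ℚ := B.map (Int.cast : ℤ → ℚ) with hBqdef
  have hBsymm : Bᵀ = B := by rw [← hA₁, Matrix.transpose_mul, Matrix.transpose_transpose]
  have hBqsymm : Bqᵀ = Bq := by rw [hBqdef, ← Matrix.transpose_map, hBsymm]
  -- surjectivity of Bq.mulVec
  have hinj : Function.Injective (Matrix.mulVecLin Bq) := by
    rw [← LinearMap.ker_eq_bot, LinearMap.ker_eq_bot']
    intro x hx
    by_contra hxne
    have h0 : qform B x x = 0 := by
      simp only [qform, ← hBqdef]
      rw [show Bq *ᵥ x = 0 from hx]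
      simp
    exact absurd h0 (ne_of_gt (hpos x hxne))
  have hsurjB : Function.Surjective (Matrix.mulVecLin Bq) :=
    (LinearMap.injective_iff_surjective).mp hinj
  -- the transfer principle
  have transfer : ∀ χ₁ : Fin m₁ → ℤ, (∀ j, χ₁ j = 1 ∨ χ₁ j = -1) →
      ∃ χ₂ : Fin m₂ → ℤ, (∀ j, χ₂ j = 1 ∨ χ₂ j = -1) ∧
        ∀ y : Fin n → ℤ, χ₂ ⬝ᵥ (A₂ *ᵥ y) = χ₁ ⬝ᵥ (A₁ *ᵥ y) := by
    intro χ₁ hχ₁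
    obtain ⟨ξ, hξ⟩ := hsurjB (fun k => (((A₁ᵀ *ᵥ χ₁) k : ℤ) : ℚ))
    have hξ' : Bq *ᵥ ξ = fun k => (((A₁ᵀ *ᵥ χ₁) k : ℤ) : ℚ) := hξ
    have hkey : ∀ y : Fin n → ℤ,
        qform B ξ (fun k => (y k : ℚ)) = ((χ₁ ⬝ᵥ (A₁ *ᵥ y) : ℤ) : ℚ) := by
      intro y
      have h1 : qform B ξ (fun k => (y k : ℚ))
          = (Bq *ᵥ ξ) ⬝ᵥ (fun k => (y k : ℚ)) := by
        simp only [qform, ← hBqdef]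
        rw [Matrix.dotProduct_mulVec, ← hBqsymm, Matrix.vecMul_transpose, hBqsymm]
      rw [h1, hξ']
      have h2 : χ₁ ⬝ᵥ (A₁ *ᵥ y) = (A₁ᵀ *ᵥ χ₁) ⬝ᵥ y := by
        rw [Matrix.dotProduct_mulVec, ← Matrix.mulVec_transpose]
      rw [h2]
      push_cast
      simp [dotProduct]
    have hdual : ξ ∈ dualOf B (intVecs (Fin n)) := by
      constructor
      · rw [span_intVecs_top]; trivial
      · intro y hy
        choose m hm using hy
        have hy' : y = fun k => ((m k : ℤ) : ℚ) := funext fun k => hm k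
        rw [hy']
        exact ⟨χ₁ ⬝ᵥ (A₁ *ᵥ m), (hkey m)⟩
    have hshort := hinto₁ χ₁ hχ₁ ξ hdual (fun y => (hkey y).symm)
    obtain ⟨χ₂, hχ₂, h2⟩ := hsurj₂ ξ hshort
    refine ⟨χ₂, hχ₂, fun y => ?_⟩
    have := (h2 y).trans ((hkey y).symm ▸ rfl : qform B ξ (fun k => (y k : ℚ)) = ((χ₁ ⬝ᵥ (A₁ *ᵥ y) : ℤ) : ℚ))
    exact_mod_cast this
  -- the squeeze: if A₁ y has entries in {-1,0,1} then so does A₂ y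
  have key2 : ∀ y : Fin n → ℤ,
      (∀ j, (A₁ *ᵥ y) j = -1 ∨ (A₁ *ᵥ y) j = 0 ∨ (A₁ *ᵥ y) j = 1) →
      ∀ j, (A₂ *ᵥ y) j = -1 ∨ (A₂ *ᵥ y) j = 0 ∨ (A₂ *ᵥ y) j = 1 := by
    intro y hy
    set u : Fin m₁ → ℤ := A₁ *ᵥ y with hu
    set w : Fin m₂ → ℤ := A₂ *ᵥ y with hw
    have hgram : w ⬝ᵥ w = u ⬝ᵥ u := by
      rw [hu, hw, gram_dot', gram_dot', hA₁, hA₂]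
    set χ₁ : Fin m₁ → ℤ := fun j => if u j = -1 then -1 else 1 with hχ₁def
    have hχ₁ : ∀ j, χ₁ j = 1 ∨ χ₁ j = -1 := by
      intro j; by_cases h : u j = -1 <;> simp [hχ₁def, h]
    have hval : χ₁ ⬝ᵥ u = u ⬝ᵥ u := by
      refine Finset.sum_congr rfl fun j _ => ?_
      rcases hy j with h | h | h <;> simp [hχ₁def, hu] at h ⊢ <;> rw [h] <;> norm_num
    obtain ⟨χ₂, hχ₂, heq⟩ := transfer χ₁ hχ₁
    have h1 : χ₂ ⬝ᵥ w = w ⬝ᵥ w := by rw [hw, heq y, ← hu, hval, hgram]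
    have hnn : ∀ j ∈ Finset.univ, (0 : ℤ) ≤ w j * w j - χ₂ j * w j := by
      intro j _
      rcases hχ₂ j with h | h <;> rw [h] <;>
        rcases le_or_gt 1 (w j) with h' | h' <;> nlinarith
    have hsum : ∑ j, (w j * w j - χ₂ j * w j) = 0 := by
      rw [Finset.sum_sub_distrib]
      have : ∑ j, χ₂ j * w j = χ₂ ⬝ᵥ w := rfl
      rw [this, h1]
      simp [dotProduct]
    have hz := (Finset.sum_eq_zero_iff_of_nonneg hnn).mp hsum
    intro j
    have hj := hz j (Finset.mem_univ j)
    rcases hχ₂ j with h | h <;> rw [h] at hj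
    · have : w j * (w j - 1) = 0 := by linear_combination hj
      rcases mul_eq_zero.mp this with h' | h' <;> omega
    · have : w j * (w j + 1) = 0 := by linear_combination hj
      rcases mul_eq_zero.mp this with h' | h' <;> omega
  -- columns of A₂ have entries in {-1,0,1}
  have hcol : ∀ j k, A₂ j k = -1 ∨ A₂ j k = 0 ∨ A₂ j k = 1 := by
    intro j k
    have h := key2 (Pi.single k 1) ?_ j
    · simpa [Matrix.mulVec_single] using h
    · intro j'
      have : (A₁ *ᵥ Pi.single k 1) j' = A₁ j' k := by simp [Matrix.mulVec_single]
      rw [this]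
      rcases h01 j' k with h | h <;> simp [h]
  -- differences of columns of A₂ have entries in {-1,0,1}
  have hdiff : ∀ j k l, A₂ j k - A₂ j l = -1 ∨ A₂ j k - A₂ j l = 0 ∨ A₂ j k - A₂ j l = 1 := by
    intro j k l
    rcases eq_or_ne k l with rfl | hkl
    · simp
    have h := key2 (Pi.single k 1 - Pi.single l 1) ?_ j
    · simpa [Matrix.mulVec_sub, Matrix.mulVec_single, Pi.sub_apply] using h
    · intro j'
      have : (A₁ *ᵥ (Pi.single k 1 - Pi.single l 1)) j' = A₁ j' k - A₁ j' l := by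
        simp [Matrix.mulVec_sub, Matrix.mulVec_single, Pi.sub_apply]
      rw [this]
      rcases h01 j' k with h | h <;> rcases h01 j' l with h' | h' <;> rw [h, h'] <;> norm_num
  -- build the diagonal sign matrix
  set s : Fin m₂ → ℤ := fun j => if ∃ k, A₂ j k = -1 then -1 else 1 with hsdef
  refine ⟨Matrix.diagonal s, ?_, ?_⟩
  · rw [Matrix.diagonal_transpose, Matrix.diagonal_mul_diagonal]
    have hss : ∀ j, s j * s j = 1 := fun j => by
      by_cases h : ∃ k, A₂ j k = -1 <;> simp [hsdef, h]
    ext i j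
    rcases eq_or_ne i j with rfl | hij
    · simp [Matrix.diagonal_apply_eq, hss, Matrix.one_apply_eq]
    · simp [Matrix.diagonal_apply_ne _ hij, Matrix.one_apply_ne hij]
  · intro j k
    rw [Matrix.diagonal_transpose]
    have he : (Matrix.diagonal s * A₂) j k = s j * A₂ j k := by
      simp [Matrix.diagonal_mul]
    rw [he]
    by_cases h : ∃ k, A₂ j k = -1
    · obtain ⟨k₀, hk₀⟩ := h
      have hs : s j = -1 := by simp [hsdef]; exact ⟨k₀, hk₀⟩
      rw [hs]
      have := hdiff j k k₀
      rcases hcol j k with h' | h' | h' <;> rw [h'] <;> norm_num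
      · omega
    · have hs : s j = 1 := by simp [hsdef] at h ⊢; exact h
      rw [hs]
      have hne := h
      push_neg at hne
      rcases hcol j k with h' | h' | h'
      · exact absurd h' (hne k)
      · left; rw [h']; ring
      · right; rw [h']; ring


end Greene
end

section
/- For any graph G there exist a maximal spanning forest F and an orientation 𝒪₁ of G such that ⟨x_i, e_j⟩ ∈ {0,1} for every fundamental cut vector x_i ∈ B_𝒞 and every edge e_j ∈ E(G), and an orientation 𝒪₂ of G (with the same forest F) such that ⟨x_i, e_j⟩ ∈ {0,1} for every fundamental cycle vector x_i ∈ B_ℱ and every edge e_j ∈ E(G). -/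
set_option linter.unusedSectionVars false

open Matrix BigOperators

namespace Greene

/-!
Depth-first search produces a normal spanning forest `T`: the two ends of every edge of `G`
are comparable in the ancestor order of `T`. Orient all edges from ancestor to descendant.
Deleting the forest edge above a vertex `c` separates the descendants of `c` from the rest of
its component, and by normality every edge between the two sides enters the descendants of `c`,
so each fundamental cut is crossed in one direction only. If instead the forest edges point
towards the roots, the fundamental cycle of a non-forest edge goes down that edge and back up
the forest path, so it is a directed cycle.
-/

namespace MultiGraph

variable {G : MultiGraph}

def Joins (G : MultiGraph) (e : Fin G.nE) (a b : Fin G.nV) : Prop :=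
  (G.hd e = a ∧ G.tl e = b) ∨ (G.hd e = b ∧ G.tl e = a)

lemma joins_hd_tl (e : Fin G.nE) : G.Joins e (G.hd e) (G.tl e) :=
  Or.inl ⟨rfl, rfl⟩

lemma Joins.symm {e : Fin G.nE} {a b : Fin G.nV} (h : G.Joins e a b) : G.Joins e b a :=
  Or.symm h

lemma Joins.ne {e : Fin G.nE} {a b : Fin G.nV} (h : G.Joins e a b) : a ≠ b := by
  rcases h with ⟨rfl, rfl⟩ | ⟨rfl, rfl⟩
  exacts [G.loopless e, (G.loopless e).symm]

lemma Joins.eq_or_eq {e : Fin G.nE} {a b c d : Fin G.nV} (h : G.Joins e a b)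
    (h' : G.Joins e c d) : (a = c ∧ b = d) ∨ (a = d ∧ b = c) := by
  rcases h with ⟨rfl, rfl⟩ | ⟨rfl, rfl⟩ <;> rcases h' with ⟨rfl, rfl⟩ | ⟨rfl, rfl⟩ <;> simp

lemma joins_reorient {o : Fin G.nE → Bool} {e : Fin G.nE} {a b : Fin G.nV} :
    (G.reorient o).Joins e a b ↔ G.Joins e a b := by
  unfold Joins reorient
  cases h : o e <;> simp [h]
  tauto

lemma exists_reorient (p : Fin G.nE → Fin G.nV → Fin G.nV → Prop)
    (hp : ∀ j, p j (G.tl j) (G.hd j) ∨ p j (G.hd j) (G.tl j)) :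
    ∃ o : Fin G.nE → Bool, ∀ j, p j ((G.reorient o).tl j) ((G.reorient o).hd j) := by
  classical
  refine ⟨fun j => decide (p j (G.tl j) (G.hd j)), fun j => ?_⟩
  by_cases h : p j (G.tl j) (G.hd j)
  · simp [reorient, h]
  · simpa [reorient, h] using (hp j).resolve_left h

namespace ReachIn

variable {A : Set (Fin G.nE)} {a b c : Fin G.nV}

lemma of_joins {e : Fin G.nE} (he : e ∈ A) (h : G.Joins e a b) : G.ReachIn A a b :=
  Relation.ReflTransGen.single ⟨e, he, h⟩

lemma trans (h : G.ReachIn A a b) (h' : G.ReachIn A b c) : G.ReachIn A a c :=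
  Relation.ReflTransGen.trans h h'

lemma symm (h : G.ReachIn A a b) : G.ReachIn A b a := by
  induction h with
  | refl => exact Relation.ReflTransGen.refl
  | tail _ hstep ih =>
    obtain ⟨e, he, hj⟩ := hstep
    exact (of_joins he hj.symm).trans ih

end ReachIn

lemma not_isCycleEdgeSet_subset {F : Finset (Fin G.nE)}
    (hF : ∀ f ∈ F, ¬ G.ReachIn ↑(F.erase f) (G.hd f) (G.tl f)) {C : Set (Fin G.nE)}
    (hC : G.IsCycleEdgeSet C) : ¬ C ⊆ ↑F := by
  obtain ⟨k, hk, e, v, he, -, rfl, hadj⟩ := hC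
  obtain ⟨n, rfl⟩ : ∃ n, k = n + 1 := ⟨k - 1, by omega⟩
  intro hsub
  have hmem : ∀ i, e i ∈ F := fun i => hsub (Set.mem_range_self i)
  have hjoin : ∀ i, G.Joins (e i) (v i) (v (finRotate _ i)) := fun i => by
    rcases hadj i with ⟨h1, h2⟩ | ⟨h1, h2⟩
    exacts [Or.inr ⟨h1, h2⟩, Or.inl ⟨h2, h1⟩]
  have hpath : ∀ i, G.ReachIn ↑(F.erase (e 0)) (v 1) (v (finRotate _ i)) := by
    intro i
    induction i using Fin.induction with
    | zero =>
      rw [finRotate_apply, zero_add]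
      exact Relation.ReflTransGen.refl
    | succ i ih =>
      have hi : e i.succ ∈ F.erase (e 0) :=
        Finset.mem_erase.2 ⟨fun h => Fin.succ_ne_zero i (he h), hmem _⟩
      rw [finRotate_apply, Fin.coeSucc_eq_succ] at ih
      exact ih.trans (ReachIn.of_joins hi (hjoin i.succ))
  have h0 : G.ReachIn ↑(F.erase (e 0)) (v 0) (v (finRotate _ 0)) := by
    simpa [finRotate_last] using (hpath (Fin.last n)).symm
  refine hF _ (hmem 0) ?_
  rcases (joins_hd_tl (e 0)).eq_or_eq (hjoin 0) with ⟨h1, h2⟩ | ⟨h1, h2⟩ <;> rw [h1, h2]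
  exacts [h0, h0.symm]

lemma sum_mul_sub_eq_zero_of_bndry_eq_zero {x : Fin G.nE → ℚ} (hx : G.bndry x = 0)
    (g : Fin G.nV → ℚ) : ∑ j, x j * (g (G.hd j) - g (G.tl j)) = 0 := by
  calc ∑ j, x j * (g (G.hd j) - g (G.tl j)) = ∑ v, g v * G.bndry x v := by
        simp only [bndry, Finset.mul_sum]
        rw [Finset.sum_comm]
        refine Finset.sum_congr rfl fun j _ => ?_
        simp [mul_sub, Finset.sum_sub_distrib, mul_comm]
    _ = 0 := by simp [hx]

open Classical in
noncomputable def frontier (G : MultiGraph) (S : Finset (Fin G.nV)) : Finset (Fin G.nV) :=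
  S.filter fun u => ∃ j w, G.Joins j u w ∧ w ∉ S

section frontier

variable {S : Finset (Fin G.nV)} {u w : Fin G.nV} {j : Fin G.nE}

lemma mem_frontier : u ∈ G.frontier S ↔ u ∈ S ∧ ∃ j w, G.Joins j u w ∧ w ∉ S := by
  simp [frontier]

lemma mem_frontier_of_joins (hu : u ∈ S) (hj : G.Joins j u w) (hw : w ∉ S) :
    u ∈ G.frontier S :=
  mem_frontier.2 ⟨hu, j, w, hj, hw⟩

lemma eq_or_mem_frontier_of_mem_frontier_insert (hu : u ∈ G.frontier (insert w S)) :
    u = w ∨ u ∈ G.frontier S := by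
  obtain ⟨hu, j, v, hj, hv⟩ := mem_frontier.1 hu
  refine (Finset.mem_insert.1 hu).imp_right fun hu => mem_frontier_of_joins hu hj ?_
  exact fun hvS => hv (Finset.mem_insert_of_mem hvS)

end frontier

/-- A rooted forest: `par v` is the edge joining `v` to its parent `up v`; roots have
`par v = none` and `up v = v`. The `depth` witnesses that there are no cycles. -/
structure RootedForest (G : MultiGraph) where
  up : Fin G.nV → Fin G.nV
  par : Fin G.nV → Option (Fin G.nE)
  depth : Fin G.nV → ℕ
  up_eq_self : ∀ v, par v = none → up v = v
  joins_par : ∀ v e, par v = some e → G.Joins e v (up v)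
  depth_up_lt : ∀ v e, par v = some e → depth (up v) < depth v

namespace RootedForest

variable (T : G.RootedForest)

def Anc : Fin G.nV → Fin G.nV → Prop :=
  Relation.ReflTransGen fun a b => T.up b = a

def Comparable (a b : Fin G.nV) : Prop :=
  T.Anc a b ∨ T.Anc b a

def IsNormal : Prop :=
  ∀ j, T.Comparable (G.tl j) (G.hd j)

open Classical in
noncomputable def edges : Finset (Fin G.nE) :=
  Finset.univ.filter fun e => ∃ v, T.par v = some e

def reorient (o : Fin G.nE → Bool) : (G.reorient o).RootedForest where
  up := T.up
  par := T.par
  depth := T.depth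
  up_eq_self := T.up_eq_self
  joins_par v e h := joins_reorient.2 (T.joins_par v e h)
  depth_up_lt := T.depth_up_lt

variable {T} {a b c v w : Fin G.nV} {e f : Fin G.nE}

lemma mem_edges : e ∈ T.edges ↔ ∃ v, T.par v = some e := by
  simp [edges]

lemma Anc.trans (h : T.Anc a b) (h' : T.Anc b c) : T.Anc a c :=
  Relation.ReflTransGen.trans h h'

lemma Anc.of_up (h : T.Anc a (T.up b)) : T.Anc a b :=
  h.tail rfl

lemma Anc.up_of_ne (h : T.Anc a b) (hne : b ≠ a) : T.Anc a (T.up b) := by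
  obtain rfl | ⟨c, hac, rfl⟩ := h.cases_tail
  exacts [absurd rfl hne, hac]

lemma Anc.eq_or_depth_lt (h : T.Anc a b) : a = b ∨ T.depth a < T.depth b := by
  induction h with
  | refl => exact Or.inl rfl
  | @tail c b _ hcb ih =>
    subst hcb
    cases hb : T.par b with
    | none => rwa [T.up_eq_self b hb] at ih
    | some e =>
      exact Or.inr (ih.elim (· ▸ T.depth_up_lt b e hb) (·.trans (T.depth_up_lt b e hb)))

lemma Comparable.anc_of_depth_le (h : T.Comparable a b) (hab : T.depth a ≤ T.depth b) :
    T.Anc a b := by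
  rcases h with h | hba
  · exact h
  rcases hba.eq_or_depth_lt with rfl | hlt
  · exact Relation.ReflTransGen.refl
  · omega

lemma not_anc_up (hc : T.par c = some f) : ¬ T.Anc c (T.up c) := fun h => by
  have hlt := T.depth_up_lt c f hc
  rcases h.eq_or_depth_lt with h | h
  · rw [← h] at hlt
    exact lt_irrefl _ hlt
  · exact lt_asymm h hlt

lemma eq_of_par_eq (hv : T.par v = some e) (hw : T.par w = some e) : v = w := by
  rcases (T.joins_par v e hv).eq_or_eq (T.joins_par w e hw) with ⟨h, -⟩ | ⟨h1, h2⟩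
  · exact h
  · have hv' := T.depth_up_lt v e hv
    have hw' := T.depth_up_lt w e hw
    rw [h2] at hv'
    rw [← h1] at hw'
    omega

lemma eq_up_of_joins_of_anc (hc : T.par c = some f) (hf : G.Joins f a b) (hab : T.Anc a b) :
    a = T.up c ∧ b = c := by
  rcases hf.eq_or_eq (T.joins_par c f hc) with ⟨rfl, rfl⟩ | h
  · exact absurd hab (not_anc_up hc)
  · exact h

lemma reachIn_up {A : Set (Fin G.nE)} (hA : ∀ e, T.par v = some e → e ∈ A) :
    G.ReachIn A (T.up v) v := by
  cases hv : T.par v with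
  | none =>
    rw [T.up_eq_self v hv]
    exact Relation.ReflTransGen.refl
  | some e => exact ReachIn.of_joins (hA e hv) (T.joins_par v e hv).symm

lemma Anc.reachIn_edges (h : T.Anc a b) : G.ReachIn ↑T.edges a b :=
  Relation.ReflTransGen.lift' id
    (fun _ b (hab : T.up b = _) => hab ▸ reachIn_up fun _ he => mem_edges.2 ⟨b, he⟩) _ _ h

lemma anc_iff_of_joins (hc : T.par c = some f) {j : Fin G.nE} (hj : j ∈ T.edges.erase f)
    (h : G.Joins j a b) : T.Anc c a ↔ T.Anc c b := by
  obtain ⟨hjf, hj⟩ := Finset.mem_erase.1 hj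
  obtain ⟨v, hv⟩ := mem_edges.1 hj
  have hvc : v ≠ c := by
    rintro rfl
    exact hjf (Option.some_injective _ (hv.symm.trans hc))
  have key : T.Anc c v ↔ T.Anc c (T.up v) := ⟨fun h => h.up_of_ne hvc, Anc.of_up⟩
  rcases h.eq_or_eq (T.joins_par v j hv) with ⟨rfl, rfl⟩ | ⟨rfl, rfl⟩
  exacts [key, key.symm]

lemma anc_iff_of_reachIn (hc : T.par c = some f) (h : G.ReachIn ↑(T.edges.erase f) a b) :
    T.Anc c a ↔ T.Anc c b := by
  induction h with
  | refl => rfl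
  | tail _ hstep ih =>
    obtain ⟨j, hj, hjoin⟩ := hstep
    exact ih.trans (anc_iff_of_joins hc hj hjoin)

lemma not_reachIn_erase (hc : T.par c = some f) : ¬ G.ReachIn ↑(T.edges.erase f) c (T.up c) :=
  fun h => not_anc_up hc ((anc_iff_of_reachIn hc h).1 Relation.ReflTransGen.refl)

lemma Anc.anc_or_reachIn_erase (hc : T.par c = some f) (h : T.Anc a b) :
    T.Anc c b ∨ G.ReachIn ↑(T.edges.erase f) a b := by
  induction h with
  | refl => exact Or.inr Relation.ReflTransGen.refl
  | @tail d b _ hdb ih =>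
    subst hdb
    by_cases hbc : b = c
    · exact Or.inl (hbc ▸ Relation.ReflTransGen.refl)
    refine ih.imp Anc.of_up fun hr => hr.trans (reachIn_up fun e he => ?_)
    exact Finset.mem_erase.2 ⟨fun hef => hbc (eq_of_par_eq he (hef ▸ hc)), mem_edges.2 ⟨b, he⟩⟩

lemma IsNormal.reachIn_edges (hT : T.IsNormal) {u v : Fin G.nV} (h : G.ReachIn Set.univ u v) :
    G.ReachIn ↑T.edges u v := by
  refine Relation.ReflTransGen.lift' id (fun a b (hab : ∃ j ∈ Set.univ, G.Joins j a b) => ?_) _ _ h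
  obtain ⟨j, -, hj⟩ := hab
  rcases hj with ⟨rfl, rfl⟩ | ⟨rfl, rfl⟩ <;> rcases hT j with h | h
  exacts [h.reachIn_edges.symm, h.reachIn_edges, h.reachIn_edges, h.reachIn_edges.symm]

lemma IsNormal.isMaxForest (hT : T.IsNormal) : G.IsMaxForest T.edges := by
  refine ⟨fun C hC => not_isCycleEdgeSet_subset (fun f hf => ?_) hC,
    fun u v => hT.reachIn_edges⟩
  obtain ⟨c, hc⟩ := mem_edges.1 hf
  rcases (joins_hd_tl f).eq_or_eq (T.joins_par c f hc) with ⟨h1, h2⟩ | ⟨h1, h2⟩ <;> rw [h1, h2]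
  exacts [not_reachIn_erase hc, fun h => not_reachIn_erase hc h.symm]

theorem cutVec_eq_zero_or_one (ho : ∀ j, T.Anc (G.tl j) (G.hd j)) (hf : f ∈ T.edges)
    (j : Fin G.nE) : G.cutVec T.edges f j = 0 ∨ G.cutVec T.edges f j = 1 := by
  obtain ⟨c, hc⟩ := mem_edges.1 hf
  have htl : G.tl f = T.up c := (eq_up_of_joins_of_anc hc (joins_hd_tl f).symm (ho f)).1
  -- no edge enters the component of `up c` from outside: its tail would be a descendant of `c`
  have hclosed : G.ReachIn ↑(T.edges.erase f) (G.hd j) (T.up c) →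
      G.ReachIn ↑(T.edges.erase f) (G.tl j) (T.up c) := fun h =>
    ((ho j).anc_or_reachIn_erase hc).elim
      (fun hcj => absurd ((anc_iff_of_reachIn hc h).1 hcj) (not_anc_up hc)) (·.trans h)
  unfold cutVec
  rw [htl]
  by_cases hhd : G.ReachIn ↑(T.edges.erase f) (G.hd j) (T.up c)
  · rw [if_pos hhd, if_pos (hclosed hhd)]
    norm_num
  · rw [if_neg hhd]
    split_ifs <;> norm_num

theorem fundCycleVec_eq_zero_or_one
    (ho : ∀ j, if j ∈ T.edges then T.Anc (G.hd j) (G.tl j) else T.Anc (G.tl j) (G.hd j))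
    (he : e ∉ T.edges) {x : Fin G.nE → ℚ} (hx : G.IsFundCycleVec T.edges e x) (j : Fin G.nE) :
    x j = 0 ∨ x j = 1 := by
  obtain ⟨hbndry, hsupp, hxe⟩ := hx
  by_cases hj : j ∈ T.edges
  swap
  · by_cases hje : j = e
    exacts [Or.inr (hje ▸ hxe), Or.inl (hsupp j hj hje)]
  obtain ⟨c, hc⟩ := mem_edges.1 hj
  classical
  -- pair the flow with the cut of `j`, given by the potential `g` of the descendants of `c`
  let g : Fin G.nV → ℚ := fun u => if T.Anc c u then 1 else 0
  have hflow := sum_mul_sub_eq_zero_of_bndry_eq_zero hbndry g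
  rw [Fintype.sum_eq_add j e (fun h => he (h ▸ hj))] at hflow
  swap
  · rintro i ⟨hij, hie⟩
    by_cases hi : i ∈ T.edges
    · simp [g, anc_iff_of_joins hc (Finset.mem_erase.2 ⟨hij, hi⟩) (joins_hd_tl i)]
    · simp [hsupp i hi hie]
  have hjdir := eq_up_of_joins_of_anc hc (joins_hd_tl j) (by simpa [hj] using ho j)
  have hedir : T.Anc (G.tl e) (G.hd e) := by simpa [he] using ho e
  have hgc : g c = 1 := if_pos Relation.ReflTransGen.refl
  have hgup : g (T.up c) = 0 := if_neg (not_anc_up hc)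
  have hxj : x j = g (G.hd e) - g (G.tl e) := by
    rw [hjdir.1, hjdir.2, hxe, hgc, hgup] at hflow
    linarith
  rw [hxj]
  simp only [g]
  split_ifs with hhd <;> norm_num
  exact hhd (Anc.trans ‹_› hedir)

variable (G) in
def discrete : G.RootedForest where
  up := id
  par _ := none
  depth _ := 0
  up_eq_self _ _ := rfl
  joins_par _ _ h := nomatch h
  depth_up_lt _ _ h := nomatch h

variable (T) in
def attach (w x : Fin G.nV) (j : Fin G.nE) (hj : G.Joins j w x)
    (hleaf : ∀ v, T.up v = w → v = w) : G.RootedForest where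
  up := Function.update T.up w x
  par := Function.update T.par w (some j)
  depth := Function.update T.depth w (T.depth x + 1)
  up_eq_self v hv := by
    have hvw : v ≠ w := by
      rintro rfl
      simp at hv
    rw [Function.update_of_ne hvw] at hv ⊢
    exact T.up_eq_self v hv
  joins_par v e hv := by
    by_cases hvw : v = w
    · subst hvw
      obtain rfl : j = e := by simpa using hv
      simpa using hj
    · rw [Function.update_of_ne hvw] at hv ⊢
      exact T.joins_par v e hv
  depth_up_lt v e hv := by
    by_cases hvw : v = w
    · subst hvw
      simp [Function.update_of_ne hj.ne.symm]
    · have hup : T.up v ≠ w := fun h => hvw (hleaf v h)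
      rw [Function.update_of_ne hvw] at hv
      simpa [Function.update_of_ne hvw, Function.update_of_ne hup] using T.depth_up_lt v e hv

section attach

variable {x : Fin G.nV} {j : Fin G.nE} {hj : G.Joins j w x} {hleaf : ∀ v, T.up v = w → v = w}

lemma Anc.attach (hw : T.up w = w) (h : T.Anc a b) : (T.attach w x j hj hleaf).Anc a b := by
  induction h with
  | refl => exact Relation.ReflTransGen.refl
  | @tail c b _ hcb ih =>
    by_cases hbw : b = w
    · subst hbw
      rw [hw] at hcb
      exact hcb ▸ ih
    · exact ih.tail ((Function.update_of_ne hbw _ _).trans hcb)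

lemma Anc.attach_self (hw : T.up w = w) (h : T.Anc a x) : (T.attach w x j hj hleaf).Anc a w :=
  (h.attach hw).tail (Function.update_self _ _ _)

end attach

variable {S : Finset (Fin G.nV)}

/-- The invariant of depth-first search after visiting `S`: the vertices of `S` with unvisited
neighbours all lie on one root-to-leaf path, which is where the search continues. -/
structure IsDFSOn (T : G.RootedForest) (S : Finset (Fin G.nV)) : Prop where
  par_eq_none : ∀ v ∉ S, T.par v = none
  up_mem : ∀ v ∈ S, T.up v ∈ S
  comparable_of_joins : ∀ j u v, G.Joins j u v → u ∈ S → v ∈ S → T.Comparable u v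
  comparable_of_mem_frontier : ∀ u ∈ G.frontier S, ∀ v ∈ G.frontier S, T.Comparable u v

lemma isDFSOn_discrete_empty : (discrete G).IsDFSOn ∅ where
  par_eq_none _ _ := rfl
  up_mem _ h := absurd h (Finset.notMem_empty _)
  comparable_of_joins _ _ _ _ h := absurd h (Finset.notMem_empty _)
  comparable_of_mem_frontier _ h := absurd (mem_frontier.1 h).1 (Finset.notMem_empty _)

lemma IsDFSOn.insert_of_frontier_eq_empty (h : T.IsDFSOn S) (hS : G.frontier S = ∅)
    (hw : w ∉ S) : T.IsDFSOn (insert w S) where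
  par_eq_none v hv := h.par_eq_none v fun hvS => hv (Finset.mem_insert_of_mem hvS)
  up_mem v hv := by
    rcases Finset.mem_insert.1 hv with rfl | hv
    · rw [T.up_eq_self v (h.par_eq_none v hw)]
      exact Finset.mem_insert_self _ _
    · exact Finset.mem_insert_of_mem (h.up_mem v hv)
  comparable_of_joins j u v hj hu hv := by
    have hnot : ∀ y, y ∉ S → ∀ z ∈ S, ¬ G.Joins j z y := fun y hy z hz hzy => by
      simpa [hS] using mem_frontier_of_joins hz hzy hy
    rcases Finset.mem_insert.1 hu with rfl | huS <;> rcases Finset.mem_insert.1 hv with rfl | hvS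
    · exact absurd rfl hj.ne
    · exact absurd hj.symm (hnot u hw v hvS)
    · exact absurd hj (hnot v hw u huS)
    · exact h.comparable_of_joins j u v hj huS hvS
  comparable_of_mem_frontier u hu v hv := by
    obtain rfl := (eq_or_mem_frontier_of_mem_frontier_insert hu).resolve_right (by simp [hS])
    obtain rfl := (eq_or_mem_frontier_of_mem_frontier_insert hv).resolve_right (by simp [hS])
    exact Or.inl Relation.ReflTransGen.refl

lemma IsDFSOn.exists_attach (h : T.IsDFSOn S) {x : Fin G.nV} {j : Fin G.nE}
    (hx : x ∈ G.frontier S) (hmax : ∀ y ∈ G.frontier S, T.Anc y x) (hj : G.Joins j w x)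
    (hw : w ∉ S) : ∃ T' : G.RootedForest, T'.IsDFSOn (insert w S) := by
  have hupw : T.up w = w := T.up_eq_self w (h.par_eq_none w hw)
  have hleaf : ∀ v, T.up v = w → v = w := fun v hv => by
    by_cases hvS : v ∈ S
    · exact absurd (hv ▸ h.up_mem v hvS) hw
    · rwa [T.up_eq_self v (h.par_eq_none v hvS)] at hv
  have hxS : x ∈ S := (mem_frontier.1 hx).1
  let T' := T.attach w x j hj hleaf
  have hanc_w : ∀ y ∈ G.frontier S, T'.Anc y w := fun y hy => (hmax y hy).attach_self hupw
  refine ⟨T', ⟨fun v hv => ?_, fun v hv => ?_, fun i u v hi hu hv => ?_, fun u hu v hv => ?_⟩⟩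
  · simp only [Finset.mem_insert, not_or] at hv
    obtain ⟨hvw, hvS⟩ := hv
    exact (Function.update_of_ne hvw _ _).trans (h.par_eq_none v hvS)
  · rcases Finset.mem_insert.1 hv with rfl | hvS
    · rw [show T'.up v = x from Function.update_self _ _ _]
      exact Finset.mem_insert_of_mem hxS
    · rw [show T'.up v = T.up v from Function.update_of_ne (ne_of_mem_of_not_mem hvS hw) _ _]
      exact Finset.mem_insert_of_mem (h.up_mem v hvS)
  · rcases Finset.mem_insert.1 hu with rfl | huS <;> rcases Finset.mem_insert.1 hv with rfl | hvS
    · exact absurd rfl hi.ne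
    · exact Or.inr (hanc_w v (mem_frontier_of_joins hvS hi.symm hw))
    · exact Or.inl (hanc_w u (mem_frontier_of_joins huS hi hw))
    · exact (h.comparable_of_joins i u v hi huS hvS).imp (·.attach hupw) (·.attach hupw)
  · rcases eq_or_mem_frontier_of_mem_frontier_insert hu with rfl | hu' <;>
      rcases eq_or_mem_frontier_of_mem_frontier_insert hv with rfl | hv'
    · exact Or.inl Relation.ReflTransGen.refl
    · exact Or.inr (hanc_w v hv')
    · exact Or.inl (hanc_w u hu')
    · exact (h.comparable_of_mem_frontier u hu' v hv').imp (·.attach hupw) (·.attach hupw)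

lemma IsDFSOn.exists_insert (h : T.IsDFSOn S) (hS : S ≠ Finset.univ) :
    ∃ w ∉ S, ∃ T' : G.RootedForest, T'.IsDFSOn (insert w S) := by
  rcases (G.frontier S).eq_empty_or_nonempty with hF | hF
  · obtain ⟨w, hw⟩ : ∃ w, w ∉ S := by simpa [Finset.eq_univ_iff_forall] using hS
    exact ⟨w, hw, T, h.insert_of_frontier_eq_empty hF hw⟩
  -- search on from the deepest vertex that still has an unvisited neighbour
  obtain ⟨x, hx, hxmax⟩ := (G.frontier S).exists_max_image T.depth hF
  obtain ⟨-, j, w, hj, hw⟩ := mem_frontier.1 hx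
  refine ⟨w, hw, h.exists_attach hx (fun y hy => ?_) hj.symm hw⟩
  exact (h.comparable_of_mem_frontier y hy x hx).anc_of_depth_le (hxmax y hy)

end RootedForest

theorem exists_isNormal (G : MultiGraph) : ∃ T : G.RootedForest, T.IsNormal := by
  have hcard : ∀ k ≤ G.nV, ∃ S : Finset (Fin G.nV), S.card = k ∧
      ∃ T : G.RootedForest, T.IsDFSOn S := by
    intro k hk
    induction k with
    | zero => exact ⟨∅, rfl, _, RootedForest.isDFSOn_discrete_empty⟩
    | succ k ih =>
      obtain ⟨S, rfl, T, hT⟩ := ih (by omega)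
      have hS : S ≠ Finset.univ := by
        rintro rfl
        simp at hk
      obtain ⟨w, hw, T', hT'⟩ := hT.exists_insert hS
      exact ⟨insert w S, Finset.card_insert_of_notMem hw, T', hT'⟩
  obtain ⟨S, hS, T, hT⟩ := hcard G.nV le_rfl
  obtain rfl : S = Finset.univ := Finset.eq_univ_of_card S (by simpa using hS)
  exact ⟨T, fun j => hT.comparable_of_joins j _ _ (joins_hd_tl j).symm
    (Finset.mem_univ _) (Finset.mem_univ _)⟩

end MultiGraph

/-- every graph has a maximal spanning forest `F` and orientations
`𝒪₁`, `𝒪₂` for which all fundamental cut vectors (resp. all fundamental cycle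
vectors) have all coordinates in `{0,1}`. -/
theorem stmt_17 (G : MultiGraph) :
    ∃ F : Finset (Fin G.nE), G.IsMaxForest F ∧
      (∃ o₁ : Fin G.nE → Bool, ∀ e ∈ F, ∀ j,
        (G.reorient o₁).cutVec F e j = 0 ∨ (G.reorient o₁).cutVec F e j = 1) ∧
      (∃ o₂ : Fin G.nE → Bool, ∀ e ∉ F, ∀ x : Fin G.nE → ℚ,
        (G.reorient o₂).IsFundCycleVec F e x → ∀ j, x j = 0 ∨ x j = 1) := by
  obtain ⟨T, hT⟩ := G.exists_isNormal
  obtain ⟨o₁, ho₁⟩ := G.exists_reorient (fun _ => T.Anc) hT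
  obtain ⟨o₂, ho₂⟩ := G.exists_reorient
    (fun j a b => if j ∈ T.edges then T.Anc b a else T.Anc a b) fun j => by
      split_ifs
      exacts [(hT j).symm, hT j]
  exact ⟨T.edges, hT.isMaxForest,
    ⟨o₁, fun e he j => (T.reorient o₁).cutVec_eq_zero_or_one ho₁ he j⟩,
    ⟨o₂, fun e he x hx j => (T.reorient o₂).fundCycleVec_eq_zero_or_one ho₂ he hx j⟩⟩

end Greene
end
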